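/- arXiv:1610.08923 — 10 statements merged into one kernel-verified Lean document; each statement's English description precedes it below -/
import Mathlib

section
/- Let V_1,…,V_n ⊆ ℂ^d be distinct two-dimensional linear subspaces such that each V_i intersects non-trivially (i.e., V_i ∩ V_j ≠ {0}) at least k other subspaces among V_1,…,V_n and, among those k subspaces, at most k/2 have the same intersection with V_i. Then dim(V_1 + ⋯ + V_n) ≤ ⌊4n/(k+2)⌋. -/
open Matrix BigOperators
open scoped ComplexOrder

noncomputable section

open Finset

lemma planeA {d : ℕ} {A B C : Submodule ℂ (Fin d → ℂ)}
    (hA : Module.finrank ℂ A = 2) (hB : Module.finrank ℂ B = 2) (hC : Module.finrank ℂ C = 2)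
    (hAB : A ≠ B) (hAC : A ≠ C)
    (h1 : A ⊓ B ≠ ⊥) (h2 : A ⊓ C ≠ ⊥) (h3 : A ⊓ B ≠ A ⊓ C) :
    (A ⊓ B) ⊔ (A ⊓ C) = A := by
  have rank1 : ∀ X : Submodule ℂ (Fin d → ℂ), Module.finrank ℂ X = 2 → A ≠ X → A ⊓ X ≠ ⊥ →
      Module.finrank ℂ ↥(A ⊓ X) = 1 := by
    intro X hX hne hbot
    have hlt : A ⊓ X < A := by
      refine lt_of_le_of_ne inf_le_left (fun h => hne ?_)
      have hle : A ≤ X := inf_eq_left.mp h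
      exact Submodule.eq_of_le_of_finrank_le hle (by rw [hA, hX])
    have h2' : Module.finrank ℂ ↥(A ⊓ X) < 2 := hA ▸ Submodule.finrank_lt_finrank_of_lt hlt
    have h0 : Module.finrank ℂ ↥(A ⊓ X) ≠ 0 := fun h => hbot (Submodule.finrank_eq_zero.mp h)
    omega
  have hr1 : Module.finrank ℂ ↥(A ⊓ B) = 1 := rank1 B hB hAB h1
  have hr2 : Module.finrank ℂ ↥(A ⊓ C) = 1 := rank1 C hC hAC h2
  have hLL : (A ⊓ B) ⊓ (A ⊓ C) = ⊥ := by
    by_contra hne'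
    have h01 : Module.finrank ℂ ↥((A ⊓ B) ⊓ (A ⊓ C)) ≠ 0 :=
      fun h => hne' (Submodule.finrank_eq_zero.mp h)
    have heq1 : (A ⊓ B) ⊓ (A ⊓ C) = A ⊓ B :=
      Submodule.eq_of_le_of_finrank_le inf_le_left (by omega)
    have hle2 : A ⊓ B ≤ A ⊓ C := heq1 ▸ inf_le_right
    exact h3 (Submodule.eq_of_le_of_finrank_le hle2 (by omega))
  have hsum := Submodule.finrank_sup_add_finrank_inf_eq (A ⊓ B) (A ⊓ C)
  rw [hLL] at hsum
  rw [finrank_bot] at hsum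
  exact Submodule.eq_of_le_of_finrank_le (sup_le inf_le_left inf_le_left) (by omega)

open Finset

lemma perm_count {n : ℕ} (x : Fin n) (T : Finset (Fin n)) (hx : x ∉ T) :
    (T.card + 1) * (univ.filter (fun σ : Equiv.Perm (Fin n) => ∀ j ∈ T, σ x < σ j)).card
      = Fintype.card (Equiv.Perm (Fin n)) := by
  classical
  set A : Finset (Fin n) := insert x T with hA
  have hxA : x ∈ A := mem_insert_self _ _
  have hAne : A.Nonempty := ⟨x, hxA⟩
  -- the argmin map
  set m : Equiv.Perm (Fin n) → Fin n :=
    fun σ => σ.symm ((A.image σ).min' (hAne.image σ)) with hm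
  have hmem : ∀ σ, m σ ∈ A := by
    intro σ
    have h := Finset.min'_mem (A.image σ) (hAne.image σ)
    rcases Finset.mem_image.mp h with ⟨a, ha, hEq⟩
    have : m σ = a := by rw [hm]; simp only [← hEq, Equiv.symm_apply_apply]
    rwa [this]
  have hmin : ∀ (σ : Equiv.Perm (Fin n)) (a : Fin n), a ∈ A →
      (m σ = a ↔ ∀ b ∈ A, σ a ≤ σ b) := by
    intro σ a ha
    constructor
    · intro h b hb
      have h1 : σ (m σ) = (A.image σ).min' (hAne.image σ) := by
        rw [hm]; simp
      rw [h] at h1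
      rw [h1]
      exact Finset.min'_le _ _ (mem_image_of_mem σ hb)
    · intro h
      have h1 : σ a ≤ (A.image σ).min' (hAne.image σ) := by
        rcases Finset.mem_image.mp (Finset.min'_mem (A.image σ) (hAne.image σ)) with ⟨b, hb, hEq⟩
        rw [← hEq]; exact h b hb
      have h2 : (A.image σ).min' (hAne.image σ) ≤ σ a :=
        Finset.min'_le _ _ (mem_image_of_mem σ ha)
      have h3 : σ a = (A.image σ).min' (hAne.image σ) := le_antisymm h1 h2
      have hrfl : m σ = σ.symm ((A.image σ).min' (hAne.image σ)) := rfl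
      rw [hrfl, ← h3, Equiv.symm_apply_apply]
  have hcard : Fintype.card (Equiv.Perm (Fin n))
      = ∑ a ∈ A, ((univ : Finset (Equiv.Perm (Fin n))).filter (fun σ => m σ = a)).card := by
    rw [← Finset.card_univ]
    exact Finset.card_eq_sum_card_fiberwise (fun σ _ => hmem σ)
  -- all fibers have the same size
  have hfib : ∀ a ∈ A, ((univ : Finset (Equiv.Perm (Fin n))).filter (fun σ => m σ = a)).card
      = ((univ : Finset (Equiv.Perm (Fin n))).filter (fun σ => m σ = x)).card := by
    intro a ha
    apply Finset.card_bij' (i := fun σ _ => Equiv.swap (σ a) (σ x) * σ)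
      (j := fun τ _ => Equiv.swap (τ a) (τ x) * τ)
    · -- left inverse
      intro σ hσ
      have ha' : (Equiv.swap (σ a) (σ x) * σ) a = σ x := by
        simp [Equiv.Perm.mul_apply, Equiv.swap_apply_left]
      have hx' : (Equiv.swap (σ a) (σ x) * σ) x = σ a := by
        simp [Equiv.Perm.mul_apply, Equiv.swap_apply_right]
      rw [ha', hx', Equiv.swap_comm, ← mul_assoc, Equiv.swap_mul_self, one_mul]
    · -- right inverse
      intro τ hτ
      have ha' : (Equiv.swap (τ a) (τ x) * τ) a = τ x := by
        simp [Equiv.Perm.mul_apply, Equiv.swap_apply_left]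
      have hx' : (Equiv.swap (τ a) (τ x) * τ) x = τ a := by
        simp [Equiv.Perm.mul_apply, Equiv.swap_apply_right]
      rw [ha', hx', Equiv.swap_comm, ← mul_assoc, Equiv.swap_mul_self, one_mul]

    · -- maps into
      intro σ hσ
      simp only [mem_filter, mem_univ, true_and] at hσ ⊢
      have hσa : ∀ b ∈ A, σ a ≤ σ b := (hmin σ a ha).mp hσ
      rw [hmin _ x hxA]
      intro b hb
      have hval : (Equiv.swap (σ a) (σ x) * σ) x = σ a := by
        simp [Equiv.Perm.mul_apply, Equiv.swap_apply_right]
      rw [hval]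
      by_cases hba : b = a
      · subst hba
        have : (Equiv.swap (σ b) (σ x) * σ) b = σ x := by
          simp [Equiv.Perm.mul_apply, Equiv.swap_apply_left]
        rw [this]; exact hσa x hxA
      · by_cases hbx : b = x
        · subst hbx
          have : (Equiv.swap (σ a) (σ b) * σ) b = σ a := by
            simp [Equiv.Perm.mul_apply, Equiv.swap_apply_right]
          rw [this]
        · have hne1 : σ b ≠ σ a := fun h => hba (σ.injective h)
          have hne2 : σ b ≠ σ x := fun h => hbx (σ.injective h)
          have : (Equiv.swap (σ a) (σ x) * σ) b = σ b := by
            simp [Equiv.Perm.mul_apply, Equiv.swap_apply_of_ne_of_ne hne1 hne2]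
          rw [this]; exact hσa b hb
    · -- reverse maps into
      intro τ hτ
      simp only [mem_filter, mem_univ, true_and] at hτ ⊢
      have hτx : ∀ b ∈ A, τ x ≤ τ b := (hmin τ x hxA).mp hτ
      rw [hmin _ a ha]
      intro b hb
      have hval : (Equiv.swap (τ a) (τ x) * τ) a = τ x := by
        simp [Equiv.Perm.mul_apply, Equiv.swap_apply_left]
      rw [hval]
      by_cases hba : b = a
      · subst hba
        have : (Equiv.swap (τ b) (τ x) * τ) b = τ x := by
          simp [Equiv.Perm.mul_apply, Equiv.swap_apply_left]
        rw [this]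
      · by_cases hbx : b = x
        · subst hbx
          have : (Equiv.swap (τ a) (τ b) * τ) b = τ a := by
            simp [Equiv.Perm.mul_apply, Equiv.swap_apply_right]
          rw [this]; exact hτx a ha
        · have hne1 : τ b ≠ τ a := fun h => hba (τ.injective h)
          have hne2 : τ b ≠ τ x := fun h => hbx (τ.injective h)
          have : (Equiv.swap (τ a) (τ x) * τ) b = τ b := by
            simp [Equiv.Perm.mul_apply, Equiv.swap_apply_of_ne_of_ne hne1 hne2]
          rw [this]; exact hτx b hb
  have hAcard : A.card = T.card + 1 := Finset.card_insert_of_notMem hx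
  have hxfiber : ((univ : Finset (Equiv.Perm (Fin n))).filter (fun σ => m σ = x))
      = (univ.filter (fun σ : Equiv.Perm (Fin n) => ∀ j ∈ T, σ x < σ j)) := by
    ext σ
    simp only [mem_filter, mem_univ, true_and]
    rw [hmin σ x hxA]
    constructor
    · intro h j hj
      have hne : σ x ≠ σ j := fun hEq => hx (by rwa [σ.injective hEq])
      exact lt_of_le_of_ne (h j (mem_insert_of_mem hj)) hne
    · intro h b hb
      rcases mem_insert.mp hb with hb | hb
      · subst hb; exact le_rfl
      · exact le_of_lt (h b hb)
  calc (T.card + 1) * (univ.filter (fun σ : Equiv.Perm (Fin n) => ∀ j ∈ T, σ x < σ j)).card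
      = ∑ _a ∈ A, (univ.filter (fun σ : Equiv.Perm (Fin n) => ∀ j ∈ T, σ x < σ j)).card := by
        rw [Finset.sum_const, hAcard, smul_eq_mul]
    _ = ∑ a ∈ A, ((univ : Finset (Equiv.Perm (Fin n))).filter (fun σ => m σ = a)).card := by
        refine Finset.sum_congr rfl (fun a ha => ?_)
        rw [hfib a ha, hxfiber]
    _ = Fintype.card (Equiv.Perm (Fin n)) := hcard.symm
/-- Pairwise incidences of two-dimensional subspaces (Theorem 6.2). -/
theorem planes_incidence {d n k : ℕ} (hk : 1 ≤ k)
    (V : Fin n → Submodule ℂ (Fin d → ℂ))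
    (hdim : ∀ i, Module.finrank ℂ (V i) = 2)
    (hdistinct : Function.Injective V)
    (hinc : ∀ i : Fin n, ∃ S : Finset (Fin n), i ∉ S ∧ S.card = k ∧
      (∀ j ∈ S, V i ⊓ V j ≠ ⊥) ∧
      ∀ U : Submodule ℂ (Fin d → ℂ),
        (({j : Fin n | j ∈ S ∧ V i ⊓ V j = U}).ncard : ℝ) ≤ (k : ℝ) / 2) :
    (Module.finrank ℂ ↥(⨆ i, V i) : ℤ) ≤ ⌊(4 * (n : ℝ)) / ((k : ℝ) + 2)⌋ := by
  classical
  choose S hiS hScard hSne hShalf using hinc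
  set Pn := Fintype.card (Equiv.Perm (Fin n)) with hPn
  set D := Module.finrank ℂ ↥(⨆ i, V i) with hD
  set c : Equiv.Perm (Fin n) → Fin n → ℕ := fun σ x =>
    if (∃ j ∈ S x, σ j < σ x) then
      (if (∃ j ∈ S x, ∃ j' ∈ S x, σ j < σ x ∧ σ j' < σ x ∧ V x ⊓ V j ≠ V x ⊓ V j') then 0 else 1)
    else 2 with hcdef
  have hVne : ∀ (x j : Fin n), j ∈ S x → V x ≠ V j := by
    intro x j hj h
    exact hiS x (by rwa [← hdistinct h] at hj)
  -- STEP 1 : for every ordering, the dimension is at most the sum of costs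
  have step1 : ∀ σ : Equiv.Perm (Fin n), D ≤ ∑ x, c σ x := by
    intro σ
    have key : ∀ r : ℕ,
        Module.finrank ℂ ↥((univ.filter (fun x : Fin n => (σ x : ℕ) < r)).sup V)
          ≤ ∑ x ∈ univ.filter (fun x : Fin n => (σ x : ℕ) < r), c σ x := by
      intro r
      induction r with
      | zero => simp
      | succ r ih =>
        by_cases hr : r < n
        · set x₀ : Fin n := σ.symm ⟨r, hr⟩ with hx₀
          have hσx₀ : σ x₀ = ⟨r, hr⟩ := by rw [hx₀]; exact σ.apply_symm_apply _
          have hsplit : univ.filter (fun x : Fin n => (σ x : ℕ) < r + 1)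
              = insert x₀ (univ.filter (fun x : Fin n => (σ x : ℕ) < r)) := by
            ext y
            simp only [mem_filter, mem_univ, true_and, mem_insert]
            constructor
            · intro h
              rcases Nat.lt_succ_iff_lt_or_eq.mp h with h | h
              · exact Or.inr h
              · left
                rw [hx₀, Equiv.eq_symm_apply]
                exact Fin.ext h
            · rintro (h | h)
              · rw [h, hσx₀]; exact Nat.lt_succ_self r
              · exact Nat.lt_succ_of_lt h
          have hnm : x₀ ∉ univ.filter (fun x : Fin n => (σ x : ℕ) < r) := by
            simp [hσx₀]
          rw [hsplit, Finset.sup_insert, Finset.sum_insert hnm]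
          set Ur := (univ.filter (fun x : Fin n => (σ x : ℕ) < r)).sup V with hUr
          have hUmem : ∀ j : Fin n, (σ j : ℕ) < r → V j ≤ Ur := by
            intro j hj
            exact Finset.le_sup (by simp [hj])
          have hlt_coe : ∀ j : Fin n, σ j < σ x₀ → (σ j : ℕ) < r := by
            intro j hj
            rw [hσx₀] at hj
            exact Fin.lt_def.mp hj
          by_cases h1 : ∃ j ∈ S x₀, σ j < σ x₀
          · by_cases h0 : ∃ j ∈ S x₀, ∃ j' ∈ S x₀,
                σ j < σ x₀ ∧ σ j' < σ x₀ ∧ V x₀ ⊓ V j ≠ V x₀ ⊓ V j'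
            · obtain ⟨j, hj, j', hj', hltj, hltj', hnee⟩ := h0
              have hVle : V x₀ ≤ Ur := by
                have hplane := planeA (hdim x₀) (hdim j) (hdim j') (hVne x₀ j hj)
                  (hVne x₀ j' hj') (hSne x₀ j hj) (hSne x₀ j' hj') hnee
                rw [← hplane]
                exact sup_le (le_trans inf_le_right (hUmem j (hlt_coe j hltj)))
                  (le_trans inf_le_right (hUmem j' (hlt_coe j' hltj')))
              have hsupeq : V x₀ ⊔ Ur = Ur := sup_eq_right.mpr hVle
              have hc0 : c σ x₀ = 0 := by
                simp only [hcdef]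
                rw [if_pos h1, if_pos ⟨j, hj, j', hj', hltj, hltj', hnee⟩]
              rw [hsupeq, hc0, zero_add]
              exact ih
            · obtain ⟨j, hj, hltj⟩ := h1
              have hL : V x₀ ⊓ V j ≤ V x₀ ⊓ Ur :=
                le_inf inf_le_left (le_trans inf_le_right (hUmem j (hlt_coe j hltj)))
              have hfr1 : 1 ≤ Module.finrank ℂ ↥(V x₀ ⊓ Ur) := by
                rcases Nat.eq_zero_or_pos (Module.finrank ℂ ↥(V x₀ ⊓ Ur)) with h' | h'
                · exfalso
                  have hbot : V x₀ ⊓ Ur = ⊥ := Submodule.finrank_eq_zero.mp h'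
                  exact hSne x₀ j hj (le_bot_iff.mp (hbot ▸ hL))
                · exact h'
              have hiden := Submodule.finrank_sup_add_finrank_inf_eq (V x₀) Ur
              have hcx : c σ x₀ = 1 := by
                simp only [hcdef]
                rw [if_pos ⟨j, hj, hltj⟩, if_neg h0]
              rw [hcx]
              have h2x := hdim x₀
              omega
          · have hiden := Submodule.finrank_sup_add_finrank_inf_eq (V x₀) Ur
            have hcx : c σ x₀ = 2 := by
              simp only [hcdef]
              rw [if_neg h1]
            rw [hcx]
            have h2x := hdim x₀
            omega
        · have heq : univ.filter (fun x : Fin n => (σ x : ℕ) < r + 1)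
              = univ.filter (fun x : Fin n => (σ x : ℕ) < r) := by
            ext y
            simp only [mem_filter, mem_univ, true_and]
            have hy : (σ y : ℕ) < n := (σ y).isLt
            omega
          rw [heq]; exact ih
    have hall : univ.filter (fun x : Fin n => (σ x : ℕ) < n) = univ := by
      ext y; simp [(σ y).isLt]
    have hsup : (⨆ i, V i) = (univ : Finset (Fin n)).sup V := by
      apply le_antisymm
      · exact iSup_le (fun i => Finset.le_sup (mem_univ i))
      · exact Finset.sup_le (fun i _ => le_iSup V i)
    have hkey := key n
    rw [hall] at hkey
    rw [hD, hsup]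
    exact hkey
  -- STEP 2 : counting over permutations, for a fixed plane x
  have step2 : ∀ x : Fin n, (k + 2) * (∑ σ : Equiv.Perm (Fin n), c σ x) ≤ 4 * Pn := by
    intro x
    set LS : Finset (Submodule ℂ (Fin d → ℂ)) := (S x).image (fun j => V x ⊓ V j) with hLS
    set cls : Submodule ℂ (Fin d → ℂ) → Finset (Fin n) :=
      fun ℓ => (S x).filter (fun j => V x ⊓ V j = ℓ) with hcls
    set N : Finset (Fin n) → ℕ :=
      fun T => (univ.filter (fun σ : Equiv.Perm (Fin n) => ∀ j ∈ T, σ x < σ j)).card with hN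
    have hxSx : x ∉ S x := hiS x
    have hcls_sub : ∀ ℓ, cls ℓ ⊆ S x := fun ℓ => Finset.filter_subset _ _
    have hcount : ∀ T : Finset (Fin n), T ⊆ S x → (T.card + 1) * N T = Pn := by
      intro T hT
      exact perm_count x T (fun h => hxSx (hT h))
    have hsum_s : ∑ ℓ ∈ LS, (cls ℓ).card = k := by
      rw [← hScard x]
      exact (Finset.card_eq_sum_card_fiberwise
        (fun j hj => mem_image_of_mem (fun j => V x ⊓ V j) hj)).symm
    have hs_le : ∀ ℓ, 2 * (cls ℓ).card ≤ k := by
      intro ℓ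
      have h := hShalf x ℓ
      have hset : {j : Fin n | j ∈ S x ∧ V x ⊓ V j = ℓ} = ↑(cls ℓ) := by
        ext j; simp [hcls]
      rw [hset, Set.ncard_coe_finset] at h
      have h2 : ((2 * (cls ℓ).card : ℕ) : ℝ) ≤ (k : ℝ) := by push_cast; linarith
      exact_mod_cast h2
    -- split the sum over permutations
    have hvalsplit : ∑ σ : Equiv.Perm (Fin n), c σ x
        = (∑ σ ∈ univ.filter (fun σ : Equiv.Perm (Fin n) => ∃ j ∈ S x, σ j < σ x),
            (if (∃ j ∈ S x, ∃ j' ∈ S x, σ j < σ x ∧ σ j' < σ x ∧ V x ⊓ V j ≠ V x ⊓ V j')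
              then 0 else 1))
          + (∑ _σ ∈ univ.filter
              (fun σ : Equiv.Perm (Fin n) => ¬ ∃ j ∈ S x, σ j < σ x), 2) := by
      simp only [hcdef]
      exact Finset.sum_ite _ _
    -- second part
    have hF2 : (univ.filter (fun σ : Equiv.Perm (Fin n) => ¬ ∃ j ∈ S x, σ j < σ x))
        = univ.filter (fun σ : Equiv.Perm (Fin n) => ∀ j ∈ S x, σ x < σ j) := by
      ext σ
      simp only [mem_filter, mem_univ, true_and]
      constructor
      · intro h j hj
        push_neg at h
        have hne : σ x ≠ σ j := by
          intro hEq
          have hxj : x = j := σ.injective hEq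
          rw [← hxj] at hj
          exact hxSx hj
        exact lt_of_le_of_ne (h j hj) hne
      · rintro h ⟨j, hj, hlt⟩
        exact absurd (h j hj) (asymm hlt)
    -- first part: bounded by the union of the per-line events
    set F1 : Finset (Equiv.Perm (Fin n)) := univ.filter
      (fun σ : Equiv.Perm (Fin n) => (∃ j ∈ S x, σ j < σ x) ∧
        ¬ (∃ j ∈ S x, ∃ j' ∈ S x, σ j < σ x ∧ σ j' < σ x ∧ V x ⊓ V j ≠ V x ⊓ V j')) with hF1def
    have hfirst : (∑ σ ∈ univ.filter (fun σ : Equiv.Perm (Fin n) => ∃ j ∈ S x, σ j < σ x),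
            (if (∃ j ∈ S x, ∃ j' ∈ S x, σ j < σ x ∧ σ j' < σ x ∧ V x ⊓ V j ≠ V x ⊓ V j')
              then 0 else 1)) = F1.card := by
      rw [Finset.sum_ite, Finset.sum_const, Finset.sum_const, smul_eq_mul, smul_eq_mul,
        mul_zero, zero_add, mul_one, hF1def, ← Finset.filter_filter]
    set E : Submodule ℂ (Fin d → ℂ) → Finset (Equiv.Perm (Fin n)) := fun ℓ =>
      (univ.filter (fun σ : Equiv.Perm (Fin n) => ∀ j ∈ S x \ cls ℓ, σ x < σ j))
        \ (univ.filter (fun σ : Equiv.Perm (Fin n) => ∀ j ∈ S x, σ x < σ j)) with hE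
    have hF1sub : F1 ⊆ LS.biUnion E := by
      intro σ hσ
      simp only [hF1def, mem_filter, mem_univ, true_and] at hσ
      obtain ⟨⟨j₀, hj₀, hlt₀⟩, hno⟩ := hσ
      refine Finset.mem_biUnion.mpr ⟨V x ⊓ V j₀, mem_image_of_mem _ hj₀, ?_⟩
      simp only [hE, Finset.mem_sdiff, mem_filter, mem_univ, true_and]
      constructor
      · intro j hj
        obtain ⟨hjS, hjnc⟩ := hj
        have hne' : V x ⊓ V j ≠ V x ⊓ V j₀ := by
          intro hEq
          exact hjnc (by simp only [hcls, mem_filter]; exact ⟨hjS, hEq⟩)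
        by_contra hnlt
        have hne2 : σ j ≠ σ x := fun h => hxSx (by rwa [σ.injective h] at hjS)
        have hlt' : σ j < σ x := lt_of_le_of_ne (not_lt.mp hnlt) hne2
        exact hno ⟨j, hjS, j₀, hj₀, hlt', hlt₀, hne'⟩
      · intro hall
        exact absurd (hall j₀ hj₀) (asymm hlt₀)
    have hEcard : ∀ ℓ, (E ℓ).card + N (S x) = N (S x \ cls ℓ) := by
      intro ℓ
      simp only [hE, hN]
      apply Finset.card_sdiff_add_card_eq_card
      intro σ hσ
      simp only [mem_filter, mem_univ, true_and] at hσ ⊢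
      exact fun j hj => hσ j (Finset.mem_sdiff.mp hj).1
    -- per-line inequality, purely in ℕ
    have hperline : ∀ ℓ ∈ LS, (k+1) * ((k+2) * (E ℓ).card) ≤ 2 * (cls ℓ).card * Pn := by
      intro ℓ _
      set s := (cls ℓ).card with hs
      set e := (E ℓ).card with he
      set N₀ := N (S x) with hN₀
      have h2s : 2 * s ≤ k := hs_le ℓ
      have hsk : s ≤ k := by omega
      obtain ⟨u, hu⟩ : ∃ u, k = s + u := ⟨k - s, by omega⟩
      have hsu : s ≤ u := by omega
      have hcard' : (S x \ cls ℓ).card = u := by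
        rw [Finset.card_sdiff_of_subset (hcls_sub ℓ), hScard, ← hs]; omega
      have hA : (u + 1) * e + (u + 1) * N₀ = Pn := by
        have h1 := hcount (S x \ cls ℓ) (Finset.sdiff_subset)
        rw [hcard'] at h1
        have h2 : (u + 1) * ((E ℓ).card + N (S x)) = Pn := by
          rw [hEcard ℓ]; exact h1
        rw [Nat.mul_add] at h2
        exact h2
      have hB : (s * N₀) + (u + 1) * N₀ = Pn := by
        have h1 := hcount (S x) (le_refl _)
        rw [hScard] at h1
        have : (k + 1) * N₀ = (s * N₀) + (u + 1) * N₀ := by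
          rw [hu]; ring
        rw [← this]; exact h1
      have hkey : (u + 1) * e = s * N₀ :=
        (Nat.add_right_cancel (hA.trans hB.symm)).symm.symm
      have hPneq : Pn = (k + 1) * N₀ := by
        have h1 := hcount (S x) (le_refl _)
        rw [hScard, ← hN₀] at h1
        exact h1.symm
      have hmul : ((k+1) * ((k+2) * e)) * (u+1) ≤ (2 * s * Pn) * (u+1) := by
        calc ((k+1) * ((k+2) * e)) * (u+1) = (k+2) * ((k+1) * ((u+1) * e)) := by ring
          _ = (k+2) * ((k+1) * (s * N₀)) := by rw [hkey]
          _ ≤ (2*(u+1)) * ((k+1) * (s * N₀)) := by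
              apply Nat.mul_le_mul_right
              omega
          _ = (2 * s * ((k+1) * N₀)) * (u+1) := by ring
          _ = (2 * s * Pn) * (u+1) := by rw [← hPneq]
      exact Nat.le_of_mul_le_mul_right hmul (Nat.succ_pos u)
    -- assemble step 2
    have hsumc : ∑ σ : Equiv.Perm (Fin n), c σ x ≤ (∑ ℓ ∈ LS, (E ℓ).card) + 2 * N (S x) := by
      rw [hvalsplit, hfirst, hF2, Finset.sum_const, smul_eq_mul]
      have h1 : F1.card ≤ ∑ ℓ ∈ LS, (E ℓ).card :=
        le_trans (Finset.card_le_card hF1sub) (Finset.card_biUnion_le)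
      have h2 : (univ.filter (fun σ : Equiv.Perm (Fin n) => ∀ j ∈ S x, σ x < σ j)).card
          = N (S x) := rfl
      omega
    have hNsx : (k + 1) * N (S x) = Pn := by
      have h1 := hcount (S x) (le_refl _)
      rw [hScard] at h1; exact h1
    have hbig : (k+1) * ((k+2) * (∑ σ : Equiv.Perm (Fin n), c σ x)) ≤ (k+1) * (4 * Pn) := by
      calc (k+1) * ((k+2) * (∑ σ : Equiv.Perm (Fin n), c σ x))
          ≤ (k+1) * ((k+2) * ((∑ ℓ ∈ LS, (E ℓ).card) + 2 * N (S x))) := by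
            apply Nat.mul_le_mul_left
            apply Nat.mul_le_mul_left
            exact hsumc
        _ = (∑ ℓ ∈ LS, (k+1) * ((k+2) * (E ℓ).card)) + 2 * (k+2) * ((k+1) * N (S x)) := by
            rw [mul_add, mul_add, Finset.mul_sum, Finset.mul_sum]
            ring
        _ ≤ (∑ ℓ ∈ LS, 2 * (cls ℓ).card * Pn) + 2 * (k+2) * Pn := by
            apply Nat.add_le_add
            · exact Finset.sum_le_sum hperline
            · rw [hNsx]
        _ = 2 * k * Pn + 2 * (k+2) * Pn := by
            have hsum2 : ∑ ℓ ∈ LS, 2 * (cls ℓ).card * Pn = 2 * k * Pn := by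
              calc ∑ ℓ ∈ LS, 2 * (cls ℓ).card * Pn
                  = ∑ ℓ ∈ LS, (cls ℓ).card * (2 * Pn) := by
                    apply Finset.sum_congr rfl; intro ℓ _; ring
                _ = (∑ ℓ ∈ LS, (cls ℓ).card) * (2 * Pn) := by rw [← Finset.sum_mul]
                _ = k * (2 * Pn) := by rw [hsum_s]
                _ = 2 * k * Pn := by ring
            rw [hsum2]
        _ = (k+1) * (4 * Pn) := by ring
    exact Nat.le_of_mul_le_mul_left hbig (Nat.succ_pos k)
  -- combine everything
  have hmain : Pn * ((k+2) * D) ≤ Pn * (4 * n) := by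
    calc Pn * ((k+2) * D) = (k+2) * (∑ _σ : Equiv.Perm (Fin n), D) := by
          rw [Finset.sum_const, Finset.card_univ, smul_eq_mul, ← hPn]; ring
      _ ≤ (k+2) * (∑ σ : Equiv.Perm (Fin n), ∑ x, c σ x) := by
          apply Nat.mul_le_mul_left
          exact Finset.sum_le_sum (fun σ _ => step1 σ)
      _ = (k+2) * (∑ x, ∑ σ : Equiv.Perm (Fin n), c σ x) := by rw [Finset.sum_comm]
      _ = ∑ x : Fin n, (k+2) * (∑ σ : Equiv.Perm (Fin n), c σ x) := by rw [Finset.mul_sum]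
      _ ≤ ∑ _x : Fin n, 4 * Pn := Finset.sum_le_sum (fun x _ => step2 x)
      _ = n * (4 * Pn) := by rw [Finset.sum_const, Finset.card_univ, Fintype.card_fin, smul_eq_mul]
      _ = Pn * (4 * n) := by ring
  have hPpos : 0 < Pn := Fintype.card_pos
  have hfinal : (k+2) * D ≤ 4 * n := Nat.le_of_mul_le_mul_left hmain hPpos
  rw [Int.le_floor]
  have hk2 : (0:ℝ) < (k:ℝ) + 2 := by positivity
  rw [le_div_iff₀ hk2]
  have hcast : (((k+2) * D : ℕ) : ℝ) ≤ ((4 * n : ℕ) : ℝ) := Nat.cast_le.mpr hfinal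
  push_cast at hcast ⊢
  nlinarith [hcast]
end
end

section
/- Let γ_1,…,γ_n ⊂ ℂ^d be distinct degree r parametric curves such that each γ_i intersects at least k other curves among γ_1,…,γ_n and, among those k curves, at most k/(2r) have the same intersection point on γ_i. Then the n curves are all contained in a linear subspace of ℂ^d of dimension at most 2(r+1)⁴n/k. -/
open Matrix BigOperators
open scoped ComplexOrder

noncomputable section

private def coeffVec {d : ℕ} (r : ℕ) (p : Fin d → Polynomial ℂ) (m : Fin (r+1)) : Fin d → ℂ :=
  fun i => (p i).coeff m

private lemma eval_eq_comb {d r : ℕ} (p : Fin d → Polynomial ℂ)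
    (hdeg : ∀ i, (p i).natDegree ≤ r) (t : ℂ) :
    (fun i => (p i).eval t) = ∑ m : Fin (r+1), t ^ (m : ℕ) • coeffVec r p m := by
  funext i
  rw [Polynomial.eval_eq_sum_range' (Nat.lt_succ_of_le (hdeg i)),
    ← Fin.sum_univ_eq_sum_range (fun m => (p i).coeff m * t ^ m)]
  rw [Finset.sum_apply]
  refine Finset.sum_congr rfl fun m _ => ?_
  simp [coeffVec, mul_comm]

private lemma mem_of_vandermonde {m : ℕ} {V : Type*} [AddCommGroup V] [Module ℂ V]
    (e : Fin m → ℂ) (he : Function.Injective e) (v : Fin m → V)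
    (W : Submodule ℂ V) (h : ∀ s, (∑ l : Fin m, e s ^ (l : ℕ) • v l) ∈ W) (l : Fin m) : v l ∈ W := by
  classical
  set M : Matrix (Fin m) (Fin m) ℂ := Matrix.vandermonde e with hM
  have hdet : IsUnit M.det := (Matrix.det_vandermonde_ne_zero_iff.mpr he).isUnit
  have hinv : M⁻¹ * M = 1 := Matrix.nonsing_inv_mul M hdet
  have key : v l = ∑ s, (M⁻¹ l s) • (∑ j, M s j • v j) := by
    have h1 : ∀ j : Fin m, (∑ s, M⁻¹ l s * M s j) = (1 : Matrix (Fin m) (Fin m) ℂ) l j := by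
      intro j; rw [← hinv]; rfl
    calc v l = ∑ j, ((1 : Matrix (Fin m) (Fin m) ℂ) l j) • v j := by
          simp [Matrix.one_apply]
      _ = ∑ j, (∑ s, M⁻¹ l s * M s j) • v j := by simp_rw [h1]
      _ = ∑ j, ∑ s, (M⁻¹ l s * M s j) • v j := by simp_rw [Finset.sum_smul]
      _ = ∑ s, ∑ j, (M⁻¹ l s * M s j) • v j := Finset.sum_comm
      _ = ∑ s, (M⁻¹ l s) • (∑ j, M s j • v j) := by
          simp_rw [Finset.smul_sum, smul_smul]
  rw [key]
  refine Submodule.sum_mem _ fun s _ => Submodule.smul_mem _ _ ?_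
  have heq : (∑ j : Fin m, M s j • v j) = ∑ j : Fin m, e s ^ (j : ℕ) • v j :=
    Finset.sum_congr rfl fun j _ => by rw [hM, Matrix.vandermonde_apply]
  rw [heq]; exact h s

private lemma curve_mem_of_params {d r : ℕ} (p : Fin d → Polynomial ℂ)
    (hdeg : ∀ i, (p i).natDegree ≤ r)
    (W : Submodule ℂ (Fin d → ℂ)) (e : Fin (r+1) → ℂ) (he : Function.Injective e)
    (hW : ∀ s, (fun i => (p i).eval (e s)) ∈ W) (t : ℂ) :
    (fun i => (p i).eval t) ∈ W := by
  have hv : ∀ l, coeffVec r p l ∈ W := by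
    refine mem_of_vandermonde e he _ W (fun s => ?_)
    rw [← eval_eq_comb p hdeg]; exact hW s
  rw [eval_eq_comb p hdeg]
  exact Submodule.sum_mem _ fun m _ => Submodule.smul_mem _ _ (hv m)

private lemma curve_subset_of_finset {d r : ℕ} (p : Fin d → Polynomial ℂ)
    (hdeg : ∀ i, (p i).natDegree ≤ r) {γ : Set (Fin d → ℂ)}
    (hγ : γ = {x : Fin d → ℂ | ∃ t : ℂ, ∀ i, x i = (p i).eval t})
    (W : Submodule ℂ (Fin d → ℂ)) (F : Finset (Fin d → ℂ))
    (hF : ↑F ⊆ γ ∩ (W : Set (Fin d → ℂ))) (hcard : F.card = r + 1) :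
    γ ⊆ (W : Set (Fin d → ℂ)) := by
  classical
  have hmem : ∀ x : F, ∃ t : ℂ, (x : Fin d → ℂ) = fun i => (p i).eval t := by
    intro x
    have hx : (x : Fin d → ℂ) ∈ γ := (hF x.2).1
    rw [hγ] at hx
    obtain ⟨t, ht⟩ := hx
    exact ⟨t, funext ht⟩
  choose tm htm using hmem
  have hcardF : Fintype.card F = r + 1 := by simp [hcard]
  let equivF : Fin (r+1) ≃ F := (Fintype.equivFinOfCardEq hcardF).symm
  set e : Fin (r+1) → ℂ := fun s => tm (equivF s) with he_def
  have he : Function.Injective e := by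
    intro a b hab
    have h2 : (equivF a : Fin d → ℂ) = (equivF b : Fin d → ℂ) := by
      rw [htm (equivF a), htm (equivF b)]
      have : tm (equivF a) = tm (equivF b) := hab
      rw [this]
    exact equivF.injective (Subtype.ext h2)
  intro x hx
  rw [hγ] at hx
  obtain ⟨t, ht⟩ := hx
  have hxe : x = fun i => (p i).eval t := funext ht
  rw [hxe]
  refine curve_mem_of_params p hdeg W e he (fun s => ?_) t
  have h1 : (equivF s : Fin d → ℂ) ∈ W := (hF (equivF s).2).2
  rwa [htm (equivF s)] at h1

private lemma inter_small {d r : ℕ} (p : Fin d → Polynomial ℂ)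
    (hdeg : ∀ i, (p i).natDegree ≤ r) {γ : Set (Fin d → ℂ)}
    (hγ : γ = {x : Fin d → ℂ | ∃ t : ℂ, ∀ i, x i = (p i).eval t})
    (W : Submodule ℂ (Fin d → ℂ)) (h : ¬ γ ⊆ (W : Set (Fin d → ℂ))) :
    (γ ∩ (W : Set (Fin d → ℂ))).Finite ∧ (γ ∩ (W : Set (Fin d → ℂ))).ncard ≤ r := by
  rcases (γ ∩ (W : Set (Fin d → ℂ))).finite_or_infinite with hfin | hinf
  · refine ⟨hfin, ?_⟩
    by_contra hcon
    push_neg at hcon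
    have hle : r + 1 ≤ hfin.toFinset.card := by
      rw [← Set.ncard_eq_toFinset_card _ hfin]; omega
    obtain ⟨F, hFsub, hFcard⟩ := Finset.exists_subset_card_eq hle
    exact h (curve_subset_of_finset p hdeg hγ W F
      (fun x hx => hfin.mem_toFinset.mp (hFsub hx)) hFcard)
  · exfalso
    obtain ⟨F, hFsub, hFcard⟩ := hinf.exists_subset_card_eq (r+1)
    exact h (curve_subset_of_finset p hdeg hγ W F hFsub hFcard)
open scoped Classical in
private def phi {d n : ℕ} (r : ℕ) (γ : Fin n → Set (Fin d → ℂ))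
    (W : Submodule ℂ (Fin d → ℂ)) : ℕ :=
  ∑ j, if γ j ⊆ (W : Set (Fin d → ℂ)) then r + 1 else (γ j ∩ (W : Set (Fin d → ℂ))).ncard

private lemma greedy {d n r k : ℕ} (hr : 1 ≤ r) (hk : 1 ≤ k)
    (γ : Fin n → Set (Fin d → ℂ))
    (P : Fin n → Fin d → Polynomial ℂ)
    (hdeg : ∀ i j, (P i j).natDegree ≤ r)
    (hγ : ∀ i, γ i = {x : Fin d → ℂ | ∃ t : ℂ, ∀ j, x j = (P i j).eval t})
    (hinc : ∀ i : Fin n, ∃ S : Finset (Fin n), i ∉ S ∧ S.card = k ∧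
      (∀ j ∈ S, (γ i ∩ γ j).Nonempty) ∧
      ∀ p : Fin d → ℂ,
        (({j : Fin n | j ∈ S ∧ p ∈ γ i ∧ p ∈ γ j}).ncard : ℝ) ≤ (k : ℝ) / (2 * r))
    (N : ℕ) :
    ∀ W : Submodule ℂ (Fin d → ℂ), FiniteDimensional ℂ W →
      n * (r + 1) ≤ phi r γ W + N →
      ∃ W' : Submodule ℂ (Fin d → ℂ), W ≤ W' ∧ (∀ i, γ i ⊆ (W' : Set (Fin d → ℂ))) ∧
        (Module.finrank ℂ W' : ℝ) * k ≤
          (Module.finrank ℂ W : ℝ) * k + 2 * ((r : ℝ) + 1) * N := by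
  induction N using Nat.strong_induction_on with
  | _ N ih =>
  intro W fdW hbudget
  classical
  by_cases hall : ∀ i, γ i ⊆ (W : Set (Fin d → ℂ))
  · exact ⟨W, le_refl W, hall, le_add_of_nonneg_right (by positivity)⟩
  push_neg at hall
  obtain ⟨i, hi⟩ := hall
  obtain ⟨S, hiS, hScard, hSne, hSconc⟩ := hinc i
  -- chosen intersection points
  set pt : Fin n → (Fin d → ℂ) :=
    fun j => if h : (γ i ∩ γ j).Nonempty then h.choose else 0 with hpt_def
  have hpt : ∀ j ∈ S, pt j ∈ γ i ∧ pt j ∈ γ j := by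
    intro j hj
    have h := hSne j hj
    have := h.choose_spec
    simp only [hpt_def, dif_pos h]
    exact this
  -- the enlarged subspace
  set V : Submodule ℂ (Fin d → ℂ) := Submodule.span ℂ (Set.range (coeffVec r (P i))) with hV
  set W₂ := W ⊔ V with hW₂
  have hWle : W ≤ W₂ := le_sup_left
  have hγiW₂ : γ i ⊆ (W₂ : Set (Fin d → ℂ)) := by
    intro x hx
    rw [hγ i] at hx
    obtain ⟨t, ht⟩ := hx
    have hxe : x = fun j => (P i j).eval t := funext ht
    rw [hxe, eval_eq_comb (P i) (hdeg i) t]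
    exact Submodule.sum_mem _ fun m _ => Submodule.smul_mem _ _
      ((le_sup_right : V ≤ W₂) (Submodule.subset_span ⟨m, rfl⟩))
  haveI fdV : FiniteDimensional ℂ V :=
    FiniteDimensional.span_of_finite ℂ (Set.finite_range _)
  haveI fdW₂ : FiniteDimensional ℂ W₂ := Submodule.finiteDimensional_sup W V
  have hrk2 : Module.finrank ℂ W₂ ≤ Module.finrank ℂ W + (r + 1) := by
    have h1 := Submodule.finrank_sup_add_finrank_inf_eq W V
    rw [← hW₂] at h1
    have h2 : Module.finrank ℂ V ≤ r + 1 := by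
      have h3 := finrank_range_le_card (R := ℂ) (coeffVec r (P i))
      simpa [Set.finrank] using h3
    omega
  -- good and bad neighbours
  set G : Finset (Fin n) := S.filter (fun j => pt j ∉ W) with hG_def
  set B : Finset (Fin n) := S.filter (fun j => pt j ∈ W) with hB_def
  have hsmall := inter_small (P i) (hdeg i) (hγ i) W hi
  set Q := hsmall.1.toFinset with hQ_def
  have hQcard : Q.card ≤ r := by
    rw [hQ_def, ← Set.ncard_eq_toFinset_card _ hsmall.1]
    exact hsmall.2
  have hBQ : ∀ j ∈ B, pt j ∈ Q := by
    intro j hj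
    rw [hB_def, Finset.mem_filter] at hj
    rw [hQ_def, Set.Finite.mem_toFinset]
    exact ⟨(hpt j hj.1).1, hj.2⟩
  have hfib : ∀ q ∈ Q, ((B.filter fun j => pt j = q).card : ℝ) ≤ (k : ℝ) / (2 * r) := by
    intro q hq
    have hsub : ↑(B.filter fun j => pt j = q) ⊆ {j : Fin n | j ∈ S ∧ q ∈ γ i ∧ q ∈ γ j} := by
      intro j hj
      simp only [Finset.coe_filter, Set.mem_setOf_eq, hB_def, Finset.mem_filter] at hj
      obtain ⟨⟨hjS, _⟩, hjq⟩ := hj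
      subst hjq
      exact ⟨hjS, (hpt j hjS).1, (hpt j hjS).2⟩
    calc ((B.filter fun j => pt j = q).card : ℝ)
        = ((↑(B.filter fun j => pt j = q) : Set (Fin n)).ncard : ℝ) := by
          rw [Set.ncard_coe_finset]
      _ ≤ (({j : Fin n | j ∈ S ∧ q ∈ γ i ∧ q ∈ γ j}).ncard : ℝ) := by
          exact_mod_cast Nat.cast_le.mpr (Set.ncard_le_ncard hsub (Set.toFinite _))
      _ ≤ (k : ℝ) / (2 * r) := hSconc q
  have hB : (B.card : ℝ) ≤ (k : ℝ) / 2 := by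
    have hr0 : (0:ℝ) < r := by exact_mod_cast hr
    have hk0 : (0:ℝ) ≤ k := Nat.cast_nonneg k
    calc (B.card : ℝ) = ∑ q ∈ Q, ((B.filter fun j => pt j = q).card : ℝ) := by
          exact_mod_cast Finset.card_eq_sum_card_fiberwise hBQ
      _ ≤ ∑ _q ∈ Q, (k : ℝ) / (2 * r) := Finset.sum_le_sum hfib
      _ = (Q.card : ℝ) * ((k : ℝ) / (2 * r)) := by rw [Finset.sum_const, nsmul_eq_mul]
      _ ≤ (r : ℝ) * ((k : ℝ) / (2 * r)) := by
          have : (Q.card : ℝ) ≤ r := by exact_mod_cast hQcard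
          have hpos : (0:ℝ) ≤ (k : ℝ) / (2 * r) := by positivity
          exact mul_le_mul_of_nonneg_right this hpos
      _ = (k : ℝ) / 2 := by field_simp
  have hGB : G.card + B.card = k := by
    rw [← hScard, hG_def, hB_def, add_comm]
    exact Finset.card_filter_add_card_filter_not (fun j => pt j ∈ W)
  have hGk : (k : ℝ) ≤ 2 * G.card := by
    have h1 : (G.card : ℝ) + B.card = k := by exact_mod_cast hGB
    linarith
  have hG1 : 1 ≤ G.card := by
    by_contra h
    push_neg at h
    have hg0 : G.card = 0 := by omega
    rw [hg0] at hGk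
    have : (1:ℝ) ≤ k := by exact_mod_cast hk
    norm_num at hGk
    linarith
  -- potential increase
  have hφmono : ∀ j : Fin n,
      (if γ j ⊆ (W : Set (Fin d → ℂ)) then r + 1 else (γ j ∩ (W : Set (Fin d → ℂ))).ncard)
        + (if j ∈ G then 1 else 0)
      ≤ (if γ j ⊆ (W₂ : Set (Fin d → ℂ)) then r + 1
          else (γ j ∩ (W₂ : Set (Fin d → ℂ))).ncard) := by
    intro j
    have hWsub : (W : Set (Fin d → ℂ)) ⊆ (W₂ : Set (Fin d → ℂ)) := hWle
    by_cases hjG : j ∈ G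
    · have hjS : j ∈ S := Finset.mem_of_mem_filter j hjG
      have hptW : pt j ∉ (W : Set (Fin d → ℂ)) := by
        rw [hG_def, Finset.mem_filter] at hjG
        exact hjG.2
      have hptj : pt j ∈ γ j := (hpt j hjS).2
      have hjW : ¬ γ j ⊆ (W : Set (Fin d → ℂ)) := fun hsub => hptW (hsub hptj)
      have hsmallj := inter_small (P j) (hdeg j) (hγ j) W hjW
      rw [if_neg hjW, if_pos hjG]
      by_cases hjW₂ : γ j ⊆ (W₂ : Set (Fin d → ℂ))
      · rw [if_pos hjW₂]
        have := hsmallj.2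
        omega
      · rw [if_neg hjW₂]
        have hsmallj2 := inter_small (P j) (hdeg j) (hγ j) W₂ hjW₂
        have hsub : insert (pt j) (γ j ∩ (W : Set (Fin d → ℂ)))
            ⊆ γ j ∩ (W₂ : Set (Fin d → ℂ)) := by
          refine Set.insert_subset ⟨hptj, hγiW₂ (hpt j hjS).1⟩ ?_
          exact Set.inter_subset_inter_right _ hWsub
        have h1 : (insert (pt j) (γ j ∩ (W : Set (Fin d → ℂ)))).ncard
            = (γ j ∩ (W : Set (Fin d → ℂ))).ncard + 1 :=
          Set.ncard_insert_of_notMem (fun hx => hptW hx.2) hsmallj.1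
        have h2 : (insert (pt j) (γ j ∩ (W : Set (Fin d → ℂ)))).ncard
            ≤ (γ j ∩ (W₂ : Set (Fin d → ℂ))).ncard :=
          Set.ncard_le_ncard hsub hsmallj2.1
        omega
    · simp only [if_neg hjG, add_zero]
      by_cases hjW : γ j ⊆ (W : Set (Fin d → ℂ))
      · rw [if_pos hjW, if_pos (hjW.trans hWsub)]
      · rw [if_neg hjW]
        by_cases hjW₂ : γ j ⊆ (W₂ : Set (Fin d → ℂ))
        · rw [if_pos hjW₂]
          have := (inter_small (P j) (hdeg j) (hγ j) W hjW).2
          omega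
        · rw [if_neg hjW₂]
          exact Set.ncard_le_ncard (Set.inter_subset_inter_right _ hWsub)
            (inter_small (P j) (hdeg j) (hγ j) W₂ hjW₂).1
  have hφ : phi r γ W + G.card ≤ phi r γ W₂ := by
    have hcardG : G.card = ∑ j : Fin n, (if j ∈ G then 1 else 0) := by
      rw [Finset.sum_ite_mem, Finset.univ_inter, Finset.sum_const, smul_eq_mul, mul_one]
    rw [phi, phi, hcardG, ← Finset.sum_add_distrib]
    exact Finset.sum_le_sum fun j _ => hφmono j
  have hφcap : phi r γ W₂ ≤ n * (r + 1) := by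
    rw [phi]
    calc ∑ j : Fin n, (if γ j ⊆ (W₂ : Set (Fin d → ℂ)) then r + 1
          else (γ j ∩ (W₂ : Set (Fin d → ℂ))).ncard)
        ≤ ∑ _j : Fin n, (r + 1) := by
          refine Finset.sum_le_sum fun j _ => ?_
          split
          · exact le_refl _
          · have := (inter_small (P j) (hdeg j) (hγ j) W₂ (by assumption)).2
            omega
      _ = n * (r + 1) := by simp [Finset.sum_const, Finset.card_univ]
  have hGN : G.card ≤ N := by omega
  have hbudget₂ : n * (r + 1) ≤ phi r γ W₂ + (N - G.card) := by omega
  obtain ⟨W', hle', hcov', hbnd'⟩ := ih (N - G.card) (by omega) W₂ fdW₂ hbudget₂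
  refine ⟨W', hWle.trans hle', hcov', ?_⟩
  have hcast : ((N - G.card : ℕ) : ℝ) = (N : ℝ) - G.card := by
    rw [Nat.cast_sub hGN]
  have hrk2' : (Module.finrank ℂ W₂ : ℝ) ≤ (Module.finrank ℂ W : ℝ) + ((r : ℝ) + 1) := by
    exact_mod_cast hrk2
  have hk0 : (0:ℝ) ≤ k := Nat.cast_nonneg k
  have hr1 : (0:ℝ) ≤ (r : ℝ) + 1 := by positivity
  rw [hcast] at hbnd'
  nlinarith [mul_le_mul_of_nonneg_right hrk2' hk0, mul_le_mul_of_nonneg_left hGk hr1]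

/-- A degree `r` parametric curve in `ℂ^d`: the image of a polynomial map of degree at most
`r` in one variable, with at least one coordinate polynomial non-constant. -/
def IsParamCurve {d : ℕ} (r : ℕ) (γ : Set (Fin d → ℂ)) : Prop :=
  ∃ p : Fin d → Polynomial ℂ,
    (∀ i, (p i).natDegree ≤ r) ∧ (∃ i, 0 < (p i).natDegree) ∧
    γ = {x : Fin d → ℂ | ∃ t : ℂ, ∀ i, x i = (p i).eval t}

/-- Pairwise incidences of degree `r` parametric curves (Theorem 1.5 / 6.6). -/
theorem curves_incidence {d n r k : ℕ} (hr : 1 ≤ r) (hk : 1 ≤ k)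
    (γ : Fin n → Set (Fin d → ℂ))
    (hcurve : ∀ i, IsParamCurve r (γ i))
    (hdistinct : Function.Injective γ)
    (hinc : ∀ i : Fin n, ∃ S : Finset (Fin n), i ∉ S ∧ S.card = k ∧
      (∀ j ∈ S, (γ i ∩ γ j).Nonempty) ∧
      ∀ p : Fin d → ℂ,
        (({j : Fin n | j ∈ S ∧ p ∈ γ i ∧ p ∈ γ j}).ncard : ℝ) ≤ (k : ℝ) / (2 * r)) :
    ∃ W : Submodule ℂ (Fin d → ℂ),
      (∀ i, γ i ⊆ (W : Set (Fin d → ℂ))) ∧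
      (Module.finrank ℂ W : ℝ) ≤ 2 * ((r : ℝ) + 1) ^ 4 * n / k := by
  classical
  choose P hdeg hnc hγ using hcurve
  obtain ⟨W, hle, hcov, hbnd⟩ := greedy hr hk γ P hdeg hγ hinc (n * (r + 1)) ⊥
    inferInstance (Nat.le_add_left _ _)
  refine ⟨W, hcov, ?_⟩
  rw [finrank_bot] at hbnd
  have hk0 : (0:ℝ) < k := by exact_mod_cast hk
  rw [le_div_iff₀ hk0]
  have h1 : (1:ℝ) ≤ (r : ℝ) + 1 := by
    have : (0:ℝ) ≤ (r:ℝ) := Nat.cast_nonneg r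
    linarith
  have hn0 : (0:ℝ) ≤ n := Nat.cast_nonneg n
  have hbnd' : (Module.finrank ℂ W : ℝ) * k ≤ 2 * ((r:ℝ) + 1) ^ 2 * n := by
    have hcast : ((n * (r + 1) : ℕ) : ℝ) = (n : ℝ) * ((r:ℝ) + 1) := by push_cast; ring
    rw [hcast] at hbnd
    calc (Module.finrank ℂ W : ℝ) * k
        ≤ ((0:ℕ):ℝ) * (k:ℝ) + 2 * ((r:ℝ) + 1) * ((n:ℝ) * ((r:ℝ) + 1)) := hbnd
      _ = 2 * ((r:ℝ) + 1) ^ 2 * n := by push_cast; ring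
  have h2 : ((r:ℝ) + 1) ^ 2 ≤ ((r:ℝ) + 1) ^ 4 := by nlinarith [sq_nonneg ((r:ℝ) + 1), sq_nonneg (((r:ℝ) + 1)^2 - 1)]
  have h3 := mul_le_mul_of_nonneg_right h2 hn0
  linarith
end
end

section
/- Let w_1,…,w_k ∈ ℂ^d (d ≥ 2) be vectors each of which has nonzero first coordinate, and suppose that for every integer ℓ with 0 < ℓ < d, every ℓ-dimensional linear subspace of ℂ^d contains at most (ℓ/d)·k of the vectors w_1,…,w_k (counted with multiplicity). Then the multiset of matrices {Δ(w_1),…,Δ(w_k)} ⊂ ℂ^{(d−1)×d} is well-spread. -/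
open Matrix BigOperators
open scoped ComplexOrder

noncomputable section

/-- A (multi)set of `s` complex `r x c` matrices, given as an indexed family, is well-spread
if for every subspace `V` of `ℂ^c` the sum of the dimensions of the images `A_i(V)` is at
least `(r*s/c) * dim V`. -/
def WellSpread {r c s : ℕ} (B : Fin s → Matrix (Fin r) (Fin c) ℂ) : Prop :=
  ∀ V : Submodule ℂ (Fin c → ℂ),
    ((r : ℝ) * s / c) * (Module.finrank ℂ V) ≤
      ∑ i, ((Module.finrank ℂ (V.map (B i).mulVecLin) : ℝ))

/-- For `w ∈ ℂ^d`, the `(d-1) × d` matrix whose row indexed by `i` (corresponding to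
`ℓ = i + 2` in 1-based indexing) has entry `w_{i+1}` in column `0`, entry `-w_0` in column
`i+1`, and zeros elsewhere. -/
def Delta {d : ℕ} (w : Fin d → ℂ) : Matrix (Fin (d - 1)) (Fin d) ℂ :=
  fun i j =>
    if (j : ℕ) = 0 then w ⟨i.1 + 1, by have := i.isLt; omega⟩
    else if (j : ℕ) = i.1 + 1 then -w ⟨0, by have := i.isLt; omega⟩
    else 0

/-!
By rank–nullity, `dim Δ(w)(V) = dim V - dim (V ∩ ker Δ(w))`, and `ker Δ(w) = span w` when
`w₀ ≠ 0`; so `Σᵢ dim Δ(wᵢ)(V) = k · dim V - #{i | wᵢ ∈ V}`. The hypothesis bounds this count by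
`(dim V / d) · k` (trivially so when `dim V` is `0` or `d`), which is exactly the inequality
`Σᵢ dim Δ(wᵢ)(V) ≥ ((d - 1) k / d) · dim V`.
-/

section LinearAlgebra

variable {K V V₂ : Type*} [Field K] [AddCommGroup V] [Module K V] [AddCommGroup V₂] [Module K V₂]

theorem Submodule.finrank_map_add_finrank_inf_ker [FiniteDimensional K V] (f : V →ₗ[K] V₂)
    (p : Submodule K V) :
    Module.finrank K (p.map f) + Module.finrank K ↥(p ⊓ LinearMap.ker f) = Module.finrank K p := by
  have h := LinearMap.finrank_range_add_finrank_ker (f ∘ₗ p.subtype)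
  rwa [LinearMap.range_comp, Submodule.range_subtype, LinearMap.ker_comp,
    ← Submodule.finrank_map_subtype_eq, Submodule.map_comap_subtype] at h

theorem Submodule.finrank_inf_span_singleton {x : V} (hx : x ≠ 0) (p : Submodule K V)
    [Decidable (x ∈ p)] :
    Module.finrank K ↥(p ⊓ K ∙ x) = if x ∈ p then 1 else 0 := by
  split_ifs with h
  · rw [inf_eq_right.mpr ((Submodule.span_singleton_le_iff_mem x p).mpr h),
      finrank_span_singleton hx]
  · rw [disjoint_iff.mp ((Submodule.disjoint_span_singleton' hx).mpr h), finrank_bot]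

theorem Submodule.finrank_map_add_ite_of_ker_eq_span_singleton [FiniteDimensional K V]
    {f : V →ₗ[K] V₂} {x : V} (hf : LinearMap.ker f = K ∙ x) (hx : x ≠ 0) (p : Submodule K V)
    [Decidable (x ∈ p)] :
    Module.finrank K (p.map f) + (if x ∈ p then 1 else 0) = Module.finrank K p := by
  rw [← p.finrank_inf_span_singleton hx, ← hf, p.finrank_map_add_finrank_inf_ker]

end LinearAlgebra

theorem mulVec_delta_apply {d : ℕ} (w v : Fin d → ℂ) (i : Fin (d - 1)) :
    (Delta w *ᵥ v) i =
      w ⟨i.1 + 1, by have := i.isLt; omega⟩ * v ⟨0, by have := i.isLt; omega⟩ -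
        w ⟨0, by have := i.isLt; omega⟩ * v ⟨i.1 + 1, by have := i.isLt; omega⟩ := by
  have hi := i.isLt
  have hne : (⟨0, by omega⟩ : Fin d) ≠ ⟨i.1 + 1, by omega⟩ := by simp [Fin.ext_iff]
  rw [Matrix.mulVec, dotProduct, Fintype.sum_eq_add _ _ hne]
  · simp [Delta, sub_eq_add_neg]
  · rintro j ⟨h0, h1⟩
    have h0' : (j : ℕ) ≠ 0 := fun h => h0 (Fin.ext h)
    have h1' : (j : ℕ) ≠ i.1 + 1 := fun h => h1 (Fin.ext h)
    simp [Delta, h0', h1']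

theorem ker_mulVecLin_delta {d : ℕ} (hd : 0 < d) {w : Fin d → ℂ} (hw : w ⟨0, hd⟩ ≠ 0) :
    LinearMap.ker (Delta w).mulVecLin = ℂ ∙ w := by
  ext v
  rw [LinearMap.mem_ker, Submodule.mem_span_singleton, Matrix.mulVecLin_apply]
  constructor
  · intro hv
    refine ⟨v ⟨0, hd⟩ / w ⟨0, hd⟩, funext fun j => ?_⟩
    rw [Pi.smul_apply, smul_eq_mul, div_mul_eq_mul_div, div_eq_iff hw]
    obtain hj | hj := Nat.eq_zero_or_pos j.1
    · rw [show j = ⟨0, hd⟩ from Fin.ext hj]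
    · have hi := congrFun hv ⟨j.1 - 1, by omega⟩
      rw [mulVec_delta_apply, Pi.zero_apply, sub_eq_zero] at hi
      simp only [Nat.sub_add_cancel hj] at hi
      linear_combination hi
  · rintro ⟨c, rfl⟩
    ext i
    simp only [mulVec_delta_apply, Pi.smul_apply, smul_eq_mul, Pi.zero_apply]
    ring

theorem ncard_mem_le_of_forall_lt_finrank {K : Type*} [Field K] {d k : ℕ} (w : Fin k → Fin d → K)
    (hw : ∀ i, w i ≠ 0)
    (hsub : ∀ ℓ : ℕ, 0 < ℓ → ℓ < d → ∀ V : Submodule K (Fin d → K),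
      Module.finrank K V = ℓ → (({i : Fin k | w i ∈ V}).ncard : ℝ) ≤ ((ℓ : ℝ) / d) * k)
    (V : Submodule K (Fin d → K)) :
    (({i : Fin k | w i ∈ V}).ncard : ℝ) ≤ (Module.finrank K V / d : ℝ) * k := by
  obtain h0 | hpos := Nat.eq_zero_or_pos (Module.finrank K V)
  · obtain rfl : V = ⊥ := Submodule.finrank_eq_zero.mp h0
    simp [hw]
  have hle : Module.finrank K V ≤ d := by simpa using Submodule.finrank_le V
  obtain hlt | heq := hle.lt_or_eq
  · exact hsub _ hpos hlt V rfl
  · have hd : (d : ℝ) ≠ 0 := by exact_mod_cast (heq ▸ hpos).ne'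
    rw [heq, div_self hd, one_mul]
    exact_mod_cast (Set.ncard_le_card _).trans_eq (Nat.card_fin k)

/-- Claim 4.5: the matrices `Δ(w_1), …, Δ(w_k)` form a well-spread set. -/
theorem delta_wellSpread {d k : ℕ} (hd : 2 ≤ d) (w : Fin k → Fin d → ℂ)
    (hw : ∀ i, w i ⟨0, by omega⟩ ≠ 0)
    (hsub : ∀ ℓ : ℕ, 0 < ℓ → ℓ < d → ∀ V : Submodule ℂ (Fin d → ℂ),
      Module.finrank ℂ V = ℓ →
      (({i : Fin k | w i ∈ V}).ncard : ℝ) ≤ ((ℓ : ℝ) / d) * k) :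
    WellSpread (fun i => Delta (w i)) := by
  classical
  intro V
  have hw' (i : Fin k) : w i ≠ 0 := fun h => hw i (by simp [h])
  have hrank (i : Fin k) : (Module.finrank ℂ (V.map (Delta (w i)).mulVecLin) : ℝ) =
      Module.finrank ℂ V - if w i ∈ V then 1 else 0 := by
    rw [← V.finrank_map_add_ite_of_ker_eq_span_singleton (ker_mulVecLin_delta _ (hw i)) (hw' i)]
    split_ifs <;> push_cast <;> ring
  have hcount : ∑ i, (if w i ∈ V then 1 else 0 : ℝ) = ({i : Fin k | w i ∈ V}).ncard := by
    simp [Set.ncard_eq_toFinset_card']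
  have hbound := ncard_mem_le_of_forall_lt_finrank w hw' hsub V
  simp only [hrank, Finset.sum_sub_distrib, hcount, Finset.sum_const, Finset.card_univ,
    Fintype.card_fin, nsmul_eq_mul]
  rw [Nat.cast_sub (by omega : 1 ≤ d), Nat.cast_one]
  have hd0 : (0 : ℝ) < d := by positivity
  calc ((d - 1 : ℝ) * k / d) * Module.finrank ℂ V
      = k * Module.finrank ℂ V - (Module.finrank ℂ V / d : ℝ) * k := by field_simp
    _ ≤ _ := by linarith
end
end

section
/- Let A ∈ M_{m,n}(r,c) and let A* ∈ M_{n,m}(c,r) be the block matrix with blocks (A*)_{ji} = (A_{ij})* (the conjugate transpose of each block, with the block array transposed). Then cap(A)^{1/(nc)} = (nc/(mr)) · cap(A*)^{1/(mr)}. -/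
open Matrix BigOperators
open scoped ComplexOrder

noncomputable section

/-- The capacity of a block matrix `A ∈ M_{m,n}(r,c)`. -/
def cap {m n r c : ℕ} (A : Fin m → Fin n → Matrix (Fin r) (Fin c) ℂ) : ℝ :=
  sInf { z : ℝ | ∃ X : Fin m → Matrix (Fin r) (Fin r) ℂ,
    (∀ i, (X i).PosDef) ∧ (∏ i, (X i).det) = 1 ∧
    z = ∏ j, ((((n : ℂ) * c / ((m : ℂ) * r)) • ∑ i, (A i j)ᴴ * X i * A i j).det).re }

/-!
For positive semidefinite `M_1, …, M_n ∈ ℂ^{c×c}` and positive definite `Y_1, …, Y_n` with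
`∏ det Y_j = 1`, AM–GM on eigenvalues (first for each `M_j Y_j`, then across `j`) gives
`nc (∏ det M_j)^{1/(nc)} ≤ ∑ tr (M_j Y_j)`, and the infimum over such `Y` is exactly the left side:
it is attained at `Y_j ∝ M_j⁻¹`, and if some `M_j` is singular the sum can be made arbitrarily
small by taking `Y_j = δ • 1` and stretching one `Y_j` along the kernel of `M_j` to restore
`∏ det Y_j = 1`. With `M_j = ∑_i A_ijᴴ X_i A_ij` this shows
`mr · cap(A)^{1/(nc)} = inf ∑_{i,j} tr (A_ijᴴ X_i A_ij Y_j)` over normalized `X` and `Y`.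
By cyclicity of the trace this double infimum is symmetric under `A ↦ A*`, `X ↔ Y`, so it also
equals `nc · cap(A*)^{1/(mr)}`.
-/

theorem Real.card_mul_prod_rpow_inv_card_le_sum {ι : Type*} [Fintype ι] {z : ι → ℝ}
    (hz : ∀ i, 0 ≤ z i) :
    (Fintype.card ι : ℝ) * (∏ i, z i) ^ (Fintype.card ι : ℝ)⁻¹ ≤ ∑ i, z i := by
  cases isEmpty_or_nonempty ι
  · simp
  have hk : (0 : ℝ) < Fintype.card ι := Nat.cast_pos.mpr Fintype.card_pos
  have h := Real.geom_mean_le_arith_mean Finset.univ (fun _ ↦ 1) z (by simp)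
    (by simp [Fintype.card_pos]) (fun i _ ↦ hz i)
  simp only [Real.rpow_one, one_mul, Finset.sum_const, Finset.card_univ, nsmul_eq_mul,
    mul_one] at h
  rwa [le_div_iff₀ hk, mul_comm] at h

namespace Matrix

variable {ι : Type*} [Fintype ι] [DecidableEq ι]

namespace PosSemidef

variable {P Q : Matrix ι ι ℂ}

lemma re_det_nonneg (hP : P.PosSemidef) : 0 ≤ P.det.re :=
  (Complex.nonneg_iff.mp hP.det_nonneg).1

lemma ofReal_re_det (hP : P.PosSemidef) : (P.det.re : ℂ) = P.det :=
  Complex.ext (by simp) (by simp [(Complex.nonneg_iff.mp hP.det_nonneg).2])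

lemma card_mul_re_det_rpow_le_re_trace (hP : P.PosSemidef) :
    (Fintype.card ι : ℝ) * P.det.re ^ (Fintype.card ι : ℝ)⁻¹ ≤ P.trace.re := by
  rw [hP.isHermitian.det_eq_prod_eigenvalues, hP.isHermitian.trace_eq_sum_eigenvalues]
  norm_cast
  exact Real.card_mul_prod_rpow_inv_card_le_sum hP.eigenvalues_nonneg

open scoped MatrixOrder in
lemma card_mul_rpow_le_re_trace_mul (hP : P.PosSemidef) (hQ : Q.PosSemidef) :
    (Fintype.card ι : ℝ) * (P.det.re * Q.det.re) ^ (Fintype.card ι : ℝ)⁻¹ ≤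
      (P * Q).trace.re := by
  obtain ⟨B, rfl⟩ := CStarAlgebra.nonneg_iff_eq_star_mul_self.mp hQ.nonneg
  rw [star_eq_conjTranspose] at hQ ⊢
  have hBPB : (B * P * Bᴴ).PosSemidef := hP.mul_mul_conjTranspose_same B
  have htrace : (P * (Bᴴ * B)).trace = (B * P * Bᴴ).trace := by
    rw [← Matrix.mul_assoc, trace_mul_comm, Matrix.mul_assoc]
  have hdet : (B * P * Bᴴ).det = P.det * (Bᴴ * B).det := by
    simp only [det_mul]
    ring
  have hdet_re : (B * P * Bᴴ).det.re = P.det.re * (Bᴴ * B).det.re := by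
    rw [hdet]
    nth_rw 1 [← hP.ofReal_re_det, ← hQ.ofReal_re_det]
    rw [← Complex.ofReal_mul, Complex.ofReal_re]
  rw [htrace, ← hdet_re]
  exact hBPB.card_mul_re_det_rpow_le_re_trace

end PosSemidef

lemma exists_posDef_det_eq_mul_eq_smul {M : Matrix ι ι ℂ} (hM : M.det = 0) {δ D : ℝ}
    (hδ : 0 < δ) (hD : δ ^ Fintype.card ι ≤ D) :
    ∃ Y : Matrix ι ι ℂ, Y.PosDef ∧ Y.det = D ∧ M * Y = (δ : ℂ) • M := by
  obtain ⟨v, hv0, hv⟩ := exists_mulVec_eq_zero_iff.mpr hM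
  obtain ⟨hs, hs_im⟩ := Complex.pos_iff.mp (dotProduct_star_self_pos_iff.mpr hv0)
  set s := (star v ⬝ᵥ v).re
  have hsv : star v ⬝ᵥ v = s := Complex.ext rfl (by simp [← hs_im])
  have hδk : 0 < δ ^ Fintype.card ι := by positivity
  set β := δ * (D / δ ^ Fintype.card ι - 1) / s
  have hβ : 0 ≤ β :=
    div_nonneg (mul_nonneg hδ.le (by rw [sub_nonneg, le_div_iff₀ hδk]; simpa)) hs.le
  refine ⟨(δ : ℂ) • 1 + (β : ℂ) • vecMulVec v (star v), ?_, ?_, ?_⟩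
  · exact (PosDef.one.smul (Complex.zero_lt_real.mpr hδ)).add_posSemidef
      ((posSemidef_vecMulVec_self_star v).smul (Complex.zero_le_real.mpr hβ))
  · have hδ0 : (δ : ℂ) ≠ 0 := by exact_mod_cast hδ.ne'
    have : (δ : ℂ) • (1 : Matrix ι ι ℂ) + (β : ℂ) • vecMulVec v (star v) =
        (δ : ℂ) • (1 + replicateCol Unit (((β : ℂ) / δ) • v) * replicateRow Unit (star v)) := by
      rw [smul_add, ← vecMulVec_eq, smul_vecMulVec, smul_smul, mul_div_cancel₀ _ hδ0]
    rw [this, det_smul, det_one_add_replicateCol_mul_replicateRow, dotProduct_smul, hsv]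
    simp only [β, smul_eq_mul]
    push_cast
    field_simp
    ring
  · simp [Matrix.mul_add, mul_vecMulVec, hv]

end Matrix

def IsPosDefUnitDet {J ι : Type*} [Fintype J] [Fintype ι] [DecidableEq ι]
    (Y : J → Matrix ι ι ℂ) : Prop :=
  (∀ j, (Y j).PosDef) ∧ ∏ j, (Y j).det = 1

section TraceMinimization

variable {J ι : Type*} [Fintype J] [Fintype ι] [DecidableEq ι] {M Y : J → Matrix ι ι ℂ}

lemma isPosDefUnitDet_one : IsPosDefUnitDet (fun _ : J ↦ (1 : Matrix ι ι ℂ)) :=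
  ⟨fun _ ↦ PosDef.one, by simp⟩

lemma IsPosDefUnitDet.prod_re_det (hY : IsPosDefUnitDet Y) : ∏ j, (Y j).det.re = 1 := by
  have h : ((∏ j, (Y j).det.re : ℝ) : ℂ) = 1 := by
    simp only [Complex.ofReal_prod, fun j ↦ (hY.1 j).posSemidef.ofReal_re_det]
    exact hY.2
  exact_mod_cast h

lemma card_mul_prod_re_det_rpow_le_sum_re_trace_mul (hM : ∀ j, (M j).PosSemidef)
    (hY : IsPosDefUnitDet Y) :
    ((Fintype.card J * Fintype.card ι : ℕ) : ℝ) *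
        (∏ j, (M j).det.re) ^ ((Fintype.card J * Fintype.card ι : ℕ) : ℝ)⁻¹ ≤
      ∑ j, (M j * Y j).trace.re := by
  set n := Fintype.card J
  set k := Fintype.card ι
  have hd : ∀ j, 0 ≤ (M j).det.re * (Y j).det.re :=
    fun j ↦ mul_nonneg (hM j).re_det_nonneg (hY.1 j).posSemidef.re_det_nonneg
  calc ((n * k : ℕ) : ℝ) * (∏ j, (M j).det.re) ^ ((n * k : ℕ) : ℝ)⁻¹
      = k * (n * (∏ j, ((M j).det.re * (Y j).det.re) ^ (k : ℝ)⁻¹) ^ (n : ℝ)⁻¹) := by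
        rw [Real.finsetProd_rpow _ _ (fun j _ ↦ hd j), Finset.prod_mul_distrib, hY.prod_re_det,
          mul_one, ← Real.rpow_mul (Finset.prod_nonneg fun j _ ↦ (hM j).re_det_nonneg)]
        push_cast
        rw [mul_inv, mul_comm (k : ℝ)⁻¹]
        ring
    _ ≤ k * ∑ j, ((M j).det.re * (Y j).det.re) ^ (k : ℝ)⁻¹ := by
        gcongr
        exact Real.card_mul_prod_rpow_inv_card_le_sum fun j ↦ Real.rpow_nonneg (hd j) _
    _ = ∑ j, k * ((M j).det.re * (Y j).det.re) ^ (k : ℝ)⁻¹ := Finset.mul_sum _ _ _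
    _ ≤ ∑ j, (M j * Y j).trace.re := Finset.sum_le_sum fun j _ ↦
        (hM j).card_mul_rpow_le_re_trace_mul (hY.1 j).posSemidef

lemma exists_sum_re_trace_mul_eq_of_posDef [Nonempty J] [Nonempty ι] (hM : ∀ j, (M j).PosDef) :
    ∃ Y, IsPosDefUnitDet Y ∧ ∑ j, (M j * Y j).trace.re =
      ((Fintype.card J * Fintype.card ι : ℕ) : ℝ) *
        (∏ j, (M j).det.re) ^ ((Fintype.card J * Fintype.card ι : ℕ) : ℝ)⁻¹ := by
  set N := Fintype.card J * Fintype.card ι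
  set D := ∏ j, (M j).det.re
  have hD : 0 < D := Finset.prod_pos fun j _ ↦ (Complex.pos_iff.mp (hM j).det_pos).1
  set α := D ^ (N : ℝ)⁻¹
  have hα : 0 < α := Real.rpow_pos_of_pos hD _
  have hunit : ∀ j, IsUnit (M j).det := fun j ↦ (hM j).isUnit.map detMonoidHom
  refine ⟨fun j ↦ (α : ℂ) • (M j)⁻¹, ⟨fun j ↦ (hM j).inv.smul (Complex.zero_lt_real.mpr hα), ?_⟩,
    ?_⟩
  · have hprod : ∏ j, (M j).det = D := by
      simp only [D, Complex.ofReal_prod, fun j ↦ (hM j).posSemidef.ofReal_re_det]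
    have hαN : α ^ N = D :=
      Real.rpow_inv_natCast_pow hD.le (Nat.mul_ne_zero Fintype.card_ne_zero Fintype.card_ne_zero)
    simp only [det_smul, det_nonsing_inv, Ring.inverse_eq_inv, Finset.prod_mul_distrib,
      Finset.prod_const, Finset.card_univ, Finset.prod_inv_distrib, hprod, ← pow_mul]
    rw [mul_comm (Fintype.card ι), ← Complex.ofReal_pow, hαN]
    exact mul_inv_cancel₀ (by exact_mod_cast hD.ne')
  · simp only [mul_smul_comm, Matrix.mul_nonsing_inv _ (hunit _), trace_smul, trace_one,
      smul_eq_mul, Complex.re_ofReal_mul, Finset.sum_const, Finset.card_univ, nsmul_eq_mul,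
      Complex.natCast_re, N]
    push_cast
    ring

lemma exists_sum_re_trace_mul_le_of_det_eq_zero (hM : ∀ j, (M j).PosSemidef) {j₀ : J}
    (h₀ : (M j₀).det = 0) {ε : ℝ} (hε : 0 < ε) :
    ∃ Y, IsPosDefUnitDet Y ∧ ∑ j, (M j * Y j).trace.re ≤ ε := by
  classical
  set n := Fintype.card J
  set k := Fintype.card ι
  set C := ∑ j, (M j).trace.re
  have hC : 0 ≤ C := Finset.sum_nonneg fun j _ ↦ (Complex.nonneg_iff.mp (hM j).trace_nonneg).1
  set δ := min 1 (ε / (C + 1))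
  have hδ : 0 < δ := lt_min one_pos (by positivity)
  have hδk : δ ^ k ≤ 1 := pow_le_one₀ hδ.le (min_le_left _ _)
  have hδC : δ * C ≤ ε := by
    calc δ * C ≤ ε / (C + 1) * (C + 1) := by gcongr; exacts [min_le_right _ _, by linarith]
      _ = ε := div_mul_cancel₀ _ (by positivity)
  -- `Y j₀` absorbs the determinant `δ ^ (k * (n - 1))` of the other blocks `δ • 1`.
  obtain ⟨Y₀, hY₀, hdet₀, hmul₀⟩ := exists_posDef_det_eq_mul_eq_smul h₀ hδ
    (D := ((δ ^ k) ^ (n - 1))⁻¹) (hδk.trans (one_le_inv₀ (by positivity) |>.mpr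
      (pow_le_one₀ (by positivity) hδk)))
  obtain ⟨Y, hYj₀, hYne⟩ : ∃ Y : J → Matrix ι ι ℂ, Y j₀ = Y₀ ∧ ∀ j ≠ j₀, Y j = (δ : ℂ) • 1 :=
    ⟨Function.update _ j₀ Y₀, Function.update_self .., fun j hj ↦ Function.update_of_ne hj ..⟩
  have hY : ∀ j, (Y j).PosDef ∧ M j * Y j = (δ : ℂ) • M j := by
    intro j
    rcases eq_or_ne j j₀ with rfl | hj
    · exact hYj₀ ▸ ⟨hY₀, hmul₀⟩
    · rw [hYne j hj, mul_smul_comm, mul_one]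
      exact ⟨PosDef.one.smul (Complex.zero_lt_real.mpr hδ), rfl⟩
  refine ⟨Y, ⟨fun j ↦ (hY j).1, ?_⟩, ?_⟩
  · have hother : ∀ j ∈ ({j₀}ᶜ : Finset J), (Y j).det = (δ : ℂ) ^ k := fun j hj ↦ by
      rw [hYne j (by simpa using hj), det_smul, det_one, mul_one]
    rw [Fintype.prod_eq_mul_prod_compl j₀, Finset.prod_congr rfl hother, hYj₀, hdet₀,
      Finset.prod_const, Finset.card_compl, Finset.card_singleton]
    push_cast
    exact inv_mul_cancel₀ (by positivity)
  · simp only [fun j ↦ (hY j).2, trace_smul, smul_eq_mul, Complex.re_ofReal_mul, ← Finset.mul_sum]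
    exact hδC

lemma exists_sum_re_trace_mul_le [Nonempty J] [Nonempty ι] (hM : ∀ j, (M j).PosSemidef) {ε : ℝ}
    (hε : 0 < ε) :
    ∃ Y, IsPosDefUnitDet Y ∧ ∑ j, (M j * Y j).trace.re ≤
      ((Fintype.card J * Fintype.card ι : ℕ) : ℝ) *
        (∏ j, (M j).det.re) ^ ((Fintype.card J * Fintype.card ι : ℕ) : ℝ)⁻¹ + ε := by
  by_cases hdet : ∃ j, (M j).det = 0
  · obtain ⟨j₀, h₀⟩ := hdet
    obtain ⟨Y, hY, hsum⟩ := exists_sum_re_trace_mul_le_of_det_eq_zero hM h₀ hε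
    refine ⟨Y, hY, hsum.trans (le_add_of_nonneg_left ?_)⟩
    exact mul_nonneg (Nat.cast_nonneg _)
      (Real.rpow_nonneg (Finset.prod_nonneg fun j _ ↦ (hM j).re_det_nonneg) _)
  · obtain ⟨Y, hY, hsum⟩ := exists_sum_re_trace_mul_eq_of_posDef fun j ↦
      (hM j).posDef_iff_det_ne_zero.mpr fun h ↦ hdet ⟨j, h⟩
    exact ⟨Y, hY, hsum.le.trans (le_add_of_nonneg_right hε.le)⟩

end TraceMinimization

section Blocks

variable {I J ρ γ : Type*} [Fintype I] [Fintype ρ]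

def blockCongr (A : I → J → Matrix ρ γ ℂ) (X : I → Matrix ρ ρ ℂ) (j : J) : Matrix γ γ ℂ :=
  ∑ i, (A i j)ᴴ * X i * A i j

lemma posSemidef_blockCongr [Fintype γ] (A : I → J → Matrix ρ γ ℂ) {X : I → Matrix ρ ρ ℂ}
    (hX : ∀ i, (X i).PosSemidef) (j : J) : (blockCongr A X j).PosSemidef :=
  Finset.sum_induction _ _ (fun _ _ ↦ PosSemidef.add) PosSemidef.zero
    fun i _ ↦ (hX i).conjTranspose_mul_mul_same (A i j)

lemma IsPosDefUnitDet.posSemidef_blockCongr [Fintype γ] [DecidableEq ρ]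
    (A : I → J → Matrix ρ γ ℂ) {X : I → Matrix ρ ρ ℂ} (hX : IsPosDefUnitDet X) (j : J) :
    (blockCongr A X j).PosSemidef :=
  _root_.posSemidef_blockCongr A (fun i ↦ (hX.1 i).posSemidef) j

lemma sum_trace_blockCongr_mul_comm [Fintype J] [Fintype γ] (A : I → J → Matrix ρ γ ℂ)
    (X : I → Matrix ρ ρ ℂ) (Y : J → Matrix γ γ ℂ) :
    ∑ j, (blockCongr A X j * Y j).trace =
      ∑ i, (blockCongr (fun j i ↦ (A i j)ᴴ) Y i * X i).trace := by
  simp only [blockCongr, Finset.sum_mul, trace_sum, conjTranspose_conjTranspose]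
  rw [Finset.sum_comm]
  refine Finset.sum_congr rfl fun i _ ↦ Finset.sum_congr rfl fun j _ ↦ ?_
  rw [Matrix.mul_assoc, trace_mul_comm, ← Matrix.mul_assoc]

def pairingValues [Fintype J] [DecidableEq ρ] [Fintype γ] [DecidableEq γ]
    (A : I → J → Matrix ρ γ ℂ) : Set ℝ :=
  {z | ∃ X Y, IsPosDefUnitDet X ∧ IsPosDefUnitDet Y ∧ z = ∑ j, (blockCongr A X j * Y j).trace.re}

variable [Fintype J] [DecidableEq ρ] [Fintype γ] [DecidableEq γ]

lemma pairingValues_conjTranspose_subset (A : I → J → Matrix ρ γ ℂ) :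
    pairingValues (fun j i ↦ (A i j)ᴴ) ⊆ pairingValues A := by
  rintro z ⟨Y, X, hY, hX, rfl⟩
  refine ⟨X, Y, hX, hY, ?_⟩
  simp only [← Complex.re_sum, sum_trace_blockCongr_mul_comm A X Y]

lemma pairingValues_conjTranspose (A : I → J → Matrix ρ γ ℂ) :
    pairingValues (fun j i ↦ (A i j)ᴴ) = pairingValues A := by
  refine (pairingValues_conjTranspose_subset A).antisymm ?_
  simpa only [conjTranspose_conjTranspose] using
    pairingValues_conjTranspose_subset fun j i ↦ (A i j)ᴴ

lemma IsPosDefUnitDet.prod_re_det_blockCongr_nonneg (A : I → J → Matrix ρ γ ℂ)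
    {X : I → Matrix ρ ρ ℂ} (hX : IsPosDefUnitDet X) : 0 ≤ ∏ j, (blockCongr A X j).det.re :=
  Finset.prod_nonneg fun j _ ↦ (hX.posSemidef_blockCongr A j).re_det_nonneg

lemma nonneg_of_mem_pairingValues {A : I → J → Matrix ρ γ ℂ} {z : ℝ}
    (hz : z ∈ pairingValues A) : 0 ≤ z := by
  obtain ⟨X, Y, hX, hY, rfl⟩ := hz
  refine (card_mul_prod_re_det_rpow_le_sum_re_trace_mul (hX.posSemidef_blockCongr A) hY).trans' ?_
  exact mul_nonneg (Nat.cast_nonneg _)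
    (Real.rpow_nonneg (hX.prod_re_det_blockCongr_nonneg A) _)

lemma sInf_pairingValues_le [Nonempty J] [Nonempty γ] (A : I → J → Matrix ρ γ ℂ)
    {X : I → Matrix ρ ρ ℂ} (hX : IsPosDefUnitDet X) :
    sInf (pairingValues A) ≤ ((Fintype.card J * Fintype.card γ : ℕ) : ℝ) *
      (∏ j, (blockCongr A X j).det.re) ^ ((Fintype.card J * Fintype.card γ : ℕ) : ℝ)⁻¹ := by
  refine le_of_forall_pos_le_add fun ε hε ↦ ?_
  obtain ⟨Y, hY, hsum⟩ := exists_sum_re_trace_mul_le (hX.posSemidef_blockCongr A) hε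
  exact (csInf_le ⟨0, fun _ ↦ nonneg_of_mem_pairingValues⟩ ⟨X, Y, hX, hY, rfl⟩).trans hsum

end Blocks

section Capacity

variable {m n r c : ℕ} (A : Fin m → Fin n → Matrix (Fin r) (Fin c) ℂ)

lemma cap_eq_sInf_prod_re_det :
    cap A = sInf {z | ∃ X, IsPosDefUnitDet X ∧
      z = ((n : ℝ) * c / ((m : ℝ) * r)) ^ (n * c) * ∏ j, (blockCongr A X j).det.re} := by
  have hscalar : (n : ℂ) * c / ((m : ℂ) * r) = ((n * c / (m * r) : ℝ) : ℂ) := by push_cast; rfl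
  simp only [cap, IsPosDefUnitDet, and_assoc, hscalar, det_smul, ← Complex.ofReal_pow,
    Complex.re_ofReal_mul, Finset.prod_mul_distrib, Finset.prod_const, Finset.card_univ,
    Fintype.card_fin, ← pow_mul']
  rfl

lemma cap_le_of_isPosDefUnitDet {X : Fin m → Matrix (Fin r) (Fin r) ℂ} (hX : IsPosDefUnitDet X) :
    cap A ≤ ((n : ℝ) * c / ((m : ℝ) * r)) ^ (n * c) * ∏ j, (blockCongr A X j).det.re := by
  rw [cap_eq_sInf_prod_re_det]
  refine csInf_le ⟨0, ?_⟩ ⟨X, hX, rfl⟩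
  rintro _ ⟨X, hX, rfl⟩
  have := hX.prod_re_det_blockCongr_nonneg A
  positivity

lemma le_cap {a : ℝ} (h : ∀ X, IsPosDefUnitDet X →
      a ≤ ((n : ℝ) * c / ((m : ℝ) * r)) ^ (n * c) * ∏ j, (blockCongr A X j).det.re) :
    a ≤ cap A := by
  rw [cap_eq_sInf_prod_re_det]
  exact le_csInf ⟨_, 1, isPosDefUnitDet_one, rfl⟩ fun _ ⟨X, hX, hz⟩ ↦ hz ▸ h X hX

lemma cap_rpow_le_sInf_pairingValues_div (hm : 0 < m) (hn : 0 < n) (hr : 0 < r) (hc : 0 < c) :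
    cap A ^ ((n * c : ℕ) : ℝ)⁻¹ ≤ sInf (pairingValues A) / ((m : ℝ) * r) := by
  have hmr : (0 : ℝ) < m * r := by positivity
  rw [le_div_iff₀ hmr]
  refine le_csInf ⟨_, 1, 1, isPosDefUnitDet_one, isPosDefUnitDet_one, rfl⟩ ?_
  rintro _ ⟨X, Y, hX, hY, rfl⟩
  have hf := hX.prod_re_det_blockCongr_nonneg A
  have hcap : 0 ≤ cap A := le_cap A fun X hX ↦ by
    have := hX.prod_re_det_blockCongr_nonneg A
    positivity
  have hlower := card_mul_prod_re_det_rpow_le_sum_re_trace_mul (hX.posSemidef_blockCongr A) hY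
  simp only [Fintype.card_fin] at hlower
  calc cap A ^ ((n * c : ℕ) : ℝ)⁻¹ * (m * r)
      ≤ (((n : ℝ) * c / (m * r)) ^ (n * c) * ∏ j, (blockCongr A X j).det.re) ^
          ((n * c : ℕ) : ℝ)⁻¹ * (m * r) := by
        gcongr
        exact cap_le_of_isPosDefUnitDet A hX
    _ = ((n * c : ℕ) : ℝ) * (∏ j, (blockCongr A X j).det.re) ^ ((n * c : ℕ) : ℝ)⁻¹ := by
        rw [Real.mul_rpow (by positivity) hf, Real.pow_rpow_inv_natCast (by positivity)
          (by positivity), mul_right_comm, div_mul_cancel₀ _ hmr.ne', Nat.cast_mul]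
    _ ≤ _ := hlower

lemma sInf_pairingValues_div_le_cap_rpow (hm : 0 < m) (hn : 0 < n) (hr : 0 < r) (hc : 0 < c) :
    sInf (pairingValues A) / ((m : ℝ) * r) ≤ cap A ^ ((n * c : ℕ) : ℝ)⁻¹ := by
  have : NeZero n := ⟨hn.ne'⟩
  have : NeZero c := ⟨hc.ne'⟩
  have hmr : (0 : ℝ) < m * r := by positivity
  have hN : n * c ≠ 0 := by positivity
  have hs := Real.sInf_nonneg fun _ ↦ nonneg_of_mem_pairingValues (A := A)
  rw [← Real.pow_rpow_inv_natCast (div_nonneg hs hmr.le) hN]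
  refine Real.rpow_le_rpow (by positivity) (le_cap A fun X hX ↦ ?_) (by positivity)
  have hf := hX.prod_re_det_blockCongr_nonneg A
  have hupper := sInf_pairingValues_le A hX
  simp only [Fintype.card_fin] at hupper
  rw [← Real.rpow_inv_natCast_pow hf hN, ← mul_pow]
  gcongr
  rwa [div_le_iff₀ hmr, mul_right_comm, div_mul_cancel₀ _ hmr.ne', ← Nat.cast_mul]

theorem cap_rpow_eq_sInf_pairingValues_div (hm : 0 < m) (hn : 0 < n) (hr : 0 < r) (hc : 0 < c) :
    cap A ^ ((1 : ℝ) / ((n : ℝ) * c)) = sInf (pairingValues A) / ((m : ℝ) * r) := by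
  rw [one_div, ← Nat.cast_mul]
  exact (cap_rpow_le_sInf_pairingValues_div A hm hn hr hc).antisymm
    (sInf_pairingValues_div_le_cap_rpow A hm hn hr hc)

end Capacity

/-- Claim 2.8: relation between the capacity of `A` and of its block conjugate transpose. -/
theorem cap_conjTranspose {m n r c : ℕ}
    (hm : 0 < m) (hn : 0 < n) (hr : 0 < r) (hc : 0 < c)
    (A : Fin m → Fin n → Matrix (Fin r) (Fin c) ℂ) :
    cap A ^ ((1 : ℝ) / ((n : ℝ) * c)) =
      ((n : ℝ) * c / ((m : ℝ) * r)) *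
        cap (fun (j : Fin n) (i : Fin m) => (A i j)ᴴ) ^ ((1 : ℝ) / ((m : ℝ) * r)) := by
  have hmr : (m : ℝ) * r ≠ 0 := by positivity
  have hnc : (n : ℝ) * c ≠ 0 := by positivity
  rw [cap_rpow_eq_sInf_pairingValues_div A hm hn hr hc,
    cap_rpow_eq_sInf_pairingValues_div _ hn hm hc hr, pairingValues_conjTranspose]
  field_simp
end
end

section
/- Let A ∈ M_{m,n}(r,c) and let B be the scaling of A with row scaling coefficients R_1,…,R_m ∈ ℂ^{r×r} and column scaling coefficients C_1,…,C_n ∈ ℂ^{c×c} (all nonsingular), i.e. B_{ij} = R_i·A_{ij}·C_j. Then cap(B) = (Π_{j=1}^n |det(C_j)|)² · (Π_{i=1}^m |det(R_i)|)^{2nc/(mr)} · cap(A). -/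
/-! The substitution `Xᵢ ↦ λ Rᵢᴴ Xᵢ Rᵢ` with `λ = (∏ |det Rᵢ|)^(-2/(mr))` maps the feasible set
of `B` into that of `A` (the power of `λ` restores `∏ det Xᵢ = 1`), and the objective of `B` at `X`
is `(∏ |det Cⱼ|)² (∏ |det Rᵢ|)^(2nc/(mr))` times the objective of `A` at the image. Doing the same
for the inverse scaling shows that the two sets of objective values differ exactly by this factor. -/

open Matrix BigOperators
open scoped ComplexOrder

noncomputable section

open Finset
open scoped Pointwise

theorem Matrix.det_conjTranspose_mul_mul {ι : Type*} [Fintype ι] [DecidableEq ι]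
    (B M : Matrix ι ι ℂ) : (Bᴴ * M * B).det = ((‖B.det‖ ^ 2 : ℝ) : ℂ) * M.det := by
  rw [det_mul, det_mul, det_conjTranspose, mul_right_comm, Complex.star_def,
    Complex.conj_mul']
  push_cast
  ring

theorem Matrix.prod_det_smul_conjTranspose_mul_mul {ι κ : Type*} [Fintype ι] [Fintype κ]
    [DecidableEq κ] (R X : ι → Matrix κ κ ℂ) (t : ℝ) :
    ∏ i, ((t : ℂ) • ((R i)ᴴ * X i * R i)).det =
      ((t ^ (Fintype.card κ * Fintype.card ι) * (∏ i, ‖(R i).det‖) ^ 2 : ℝ) : ℂ) *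
        ∏ i, (X i).det := by
  simp only [det_smul, det_conjTranspose_mul_mul, prod_mul_distrib, prod_const, card_univ]
  push_cast
  rw [prod_pow, pow_mul]
  ring

section Capacity

variable {m n r c : ℕ}

def capObjective (A : Fin m → Fin n → Matrix (Fin r) (Fin c) ℂ)
    (X : Fin m → Matrix (Fin r) (Fin r) ℂ) : ℝ :=
  ∏ j, ((((n : ℂ) * c / ((m : ℂ) * r)) • ∑ i, (A i j)ᴴ * X i * A i j).det).re

def capValues (A : Fin m → Fin n → Matrix (Fin r) (Fin c) ℂ) : Set ℝ :=
  capObjective A '' {X | (∀ i, (X i).PosDef) ∧ ∏ i, (X i).det = 1}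

theorem cap_eq_sInf_capValues (A : Fin m → Fin n → Matrix (Fin r) (Fin c) ℂ) :
    cap A = sInf (capValues A) := by
  simp only [cap, capValues, capObjective, Set.image, Set.mem_ofPred_eq, and_assoc, eq_comm]

theorem capObjective_smul (A : Fin m → Fin n → Matrix (Fin r) (Fin c) ℂ)
    (X : Fin m → Matrix (Fin r) (Fin r) ℂ) (t : ℝ) :
    capObjective A (fun i => (t : ℂ) • X i) = t ^ (c * n) * capObjective A X := by
  simp only [capObjective, Matrix.mul_smul, Matrix.smul_mul, ← smul_sum, smul_comm _ (t : ℂ),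
    det_smul, Fintype.card_fin, ← Complex.ofReal_pow, Complex.re_ofReal_mul, prod_mul_distrib,
    prod_const, card_univ, pow_mul]

theorem capObjective_of_scaling {A B : Fin m → Fin n → Matrix (Fin r) (Fin c) ℂ}
    {R : Fin m → Matrix (Fin r) (Fin r) ℂ} {C : Fin n → Matrix (Fin c) (Fin c) ℂ}
    (hB : ∀ i j, B i j = R i * A i j * C j) (X : Fin m → Matrix (Fin r) (Fin r) ℂ) :
    capObjective B X =
      (∏ j, ‖(C j).det‖) ^ 2 * capObjective A (fun i => (R i)ᴴ * X i * R i) := by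
  rw [capObjective, capObjective, ← prod_pow, ← prod_mul_distrib]
  refine prod_congr rfl fun j _ => ?_
  have hsum : ∑ i, (B i j)ᴴ * X i * B i j =
      (C j)ᴴ * (∑ i, (A i j)ᴴ * ((R i)ᴴ * X i * R i) * A i j) * C j := by
    simp only [hB, conjTranspose_mul, Matrix.mul_sum, Matrix.sum_mul, Matrix.mul_assoc]
  rw [hsum, ← Matrix.smul_mul, ← Matrix.mul_smul, det_conjTranspose_mul_mul,
    Complex.re_ofReal_mul]

def capScalingFactor (R : Fin m → Matrix (Fin r) (Fin r) ℂ)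
    (C : Fin n → Matrix (Fin c) (Fin c) ℂ) : ℝ :=
  (∏ j, ‖(C j).det‖) ^ 2 * (∏ i, ‖(R i).det‖) ^ ((2 * (n : ℝ) * c) / ((m : ℝ) * r))

theorem capScalingFactor_pos {R : Fin m → Matrix (Fin r) (Fin r) ℂ}
    {C : Fin n → Matrix (Fin c) (Fin c) ℂ} (hR : ∀ i, (R i).det ≠ 0) (hC : ∀ j, (C j).det ≠ 0) :
    0 < capScalingFactor R C :=
  mul_pos (pow_pos (prod_pos fun j _ => norm_pos_iff.2 (hC j)) 2)
    (Real.rpow_pos_of_pos (prod_pos fun i _ => norm_pos_iff.2 (hR i)) _)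

theorem capScalingFactor_inv (R : Fin m → Matrix (Fin r) (Fin r) ℂ)
    (C : Fin n → Matrix (Fin c) (Fin c) ℂ) :
    capScalingFactor (fun i => (R i)⁻¹) (fun j => (C j)⁻¹) = (capScalingFactor R C)⁻¹ := by
  simp only [capScalingFactor, det_nonsing_inv, Ring.inverse_eq_inv', norm_inv,
    prod_inv_distrib, inv_pow]
  rw [Real.inv_rpow (prod_nonneg fun i _ => norm_nonneg _), mul_inv]

theorem capValues_subset_of_scaling (hm : 0 < m) (hr : 0 < r)
    {A B : Fin m → Fin n → Matrix (Fin r) (Fin c) ℂ}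
    {R : Fin m → Matrix (Fin r) (Fin r) ℂ} {C : Fin n → Matrix (Fin c) (Fin c) ℂ}
    (hR : ∀ i, (R i).det ≠ 0) (hB : ∀ i j, B i j = R i * A i j * C j) :
    capValues B ⊆ capScalingFactor R C • capValues A := by
  rintro _ ⟨X, ⟨hXpos, hXdet⟩, rfl⟩
  set P := ∏ i, ‖(R i).det‖
  have hP : 0 < P := prod_pos fun i _ => norm_pos_iff.2 (hR i)
  set lam := P ^ (-2 / ((m : ℝ) * r))
  have hlam : 0 < lam := Real.rpow_pos_of_pos hP _
  have hlam_pow (k : ℕ) : lam ^ k * P ^ (2 * (k : ℝ) / ((m : ℝ) * r)) = 1 := by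
    rw [← Real.rpow_natCast, ← Real.rpow_mul hP.le, ← Real.rpow_add hP,
      show -2 / ((m : ℝ) * r) * k + 2 * k / (m * r) = 0 by ring, Real.rpow_zero]
  have hmr : (m : ℝ) * r ≠ 0 := by positivity
  set Y := fun i => (lam : ℂ) • ((R i)ᴴ * X i * R i)
  have hYpos (i : Fin m) : (Y i).PosDef :=
    ((hXpos i).conjTranspose_mul_mul_same (mulVec_injective_of_isUnit
      ((isUnit_iff_isUnit_det _).2 (hR i).isUnit))).smul (by exact_mod_cast hlam)
  have hYdet : ∏ i, (Y i).det = 1 := by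
    have h := hlam_pow (r * m)
    rw [show 2 * ((r * m : ℕ) : ℝ) / (m * r) = (2 : ℕ) by push_cast; field_simp,
      Real.rpow_natCast] at h
    rw [prod_det_smul_conjTranspose_mul_mul, hXdet, Fintype.card_fin, Fintype.card_fin, h,
      Complex.ofReal_one, mul_one]
  refine ⟨capObjective A Y, ⟨Y, ⟨hYpos, hYdet⟩, rfl⟩, ?_⟩
  show capScalingFactor R C * capObjective A Y = capObjective B X
  have h := hlam_pow (c * n)
  rw [show 2 * ((c * n : ℕ) : ℝ) / (m * r) = 2 * n * c / (m * r) by push_cast; ring] at h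
  rw [capObjective_smul, capObjective_of_scaling hB, capScalingFactor]
  linear_combination ((∏ j, ‖(C j).det‖) ^ 2 * capObjective A (fun i => (R i)ᴴ * X i * R i)) * h

theorem capValues_of_scaling (hm : 0 < m) (hr : 0 < r)
    {A B : Fin m → Fin n → Matrix (Fin r) (Fin c) ℂ}
    {R : Fin m → Matrix (Fin r) (Fin r) ℂ} {C : Fin n → Matrix (Fin c) (Fin c) ℂ}
    (hR : ∀ i, (R i).det ≠ 0) (hC : ∀ j, (C j).det ≠ 0)
    (hB : ∀ i j, B i j = R i * A i j * C j) :
    capValues B = capScalingFactor R C • capValues A := by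
  have hA (i : Fin m) (j : Fin n) : A i j = (R i)⁻¹ * B i j * (C j)⁻¹ := by
    rw [hB, Matrix.mul_assoc (R i), nonsing_inv_mul_cancel_left _ _ (hR i).isUnit,
      mul_nonsing_inv_cancel_right _ _ (hC j).isUnit]
  have hRinv (i : Fin m) : ((R i)⁻¹).det ≠ 0 :=
    (isUnit_nonsing_inv_det _ (hR i).isUnit).ne_zero
  have hBA := capValues_subset_of_scaling hm hr hRinv hA
  rw [capScalingFactor_inv] at hBA
  refine (capValues_subset_of_scaling hm hr hR hB).antisymm ?_
  calc capScalingFactor R C • capValues A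
      ⊆ capScalingFactor R C • (capScalingFactor R C)⁻¹ • capValues B := Set.smul_set_mono hBA
    _ = capValues B := smul_inv_smul₀ (capScalingFactor_pos hR hC).ne' _

end Capacity

theorem cap_scaling_general {m n r c : ℕ}
    (hm : 0 < m) (hr : 0 < r)
    (A B : Fin m → Fin n → Matrix (Fin r) (Fin c) ℂ)
    (R : Fin m → Matrix (Fin r) (Fin r) ℂ) (C : Fin n → Matrix (Fin c) (Fin c) ℂ)
    (hR : ∀ i, (R i).det ≠ 0) (hC : ∀ j, (C j).det ≠ 0)
    (hB : ∀ i j, B i j = R i * A i j * C j) :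
    cap B = (∏ j, ‖(C j).det‖) ^ 2 *
      (∏ i, ‖(R i).det‖) ^ ((2 * (n : ℝ) * c) / ((m : ℝ) * r)) * cap A := by
  rw [cap_eq_sInf_capValues, cap_eq_sInf_capValues, capValues_of_scaling hm hr hR hC hB,
    Real.sInf_smul_of_nonneg (capScalingFactor_pos hR hC).le, smul_eq_mul, capScalingFactor]

/-- Claim 2.10: the capacity of a scaling. -/
theorem cap_scaling {m n r c : ℕ}
    (hm : 0 < m) (hn : 0 < n) (hr : 0 < r) (hc : 0 < c)
    (A B : Fin m → Fin n → Matrix (Fin r) (Fin c) ℂ)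
    (R : Fin m → Matrix (Fin r) (Fin r) ℂ) (C : Fin n → Matrix (Fin c) (Fin c) ℂ)
    (hR : ∀ i, (R i).det ≠ 0) (hC : ∀ j, (C j).det ≠ 0)
    (hB : ∀ i j, B i j = R i * A i j * C j) :
    cap B = (∏ j, ‖(C j).det‖) ^ 2 *
      (∏ i, ‖(R i).det‖) ^ ((2 * (n : ℝ) * c) / ((m : ℝ) * r)) * cap A :=
  cap_scaling_general hm hr A B R C hR hC hB
end
end

section
/- Let x_1,…,x_s > 0 be real numbers such that Σ_{i=1}^s x_i = s and Σ_{i=1}^s (x_i − 1)² = ε. Then Π_{i=1}^s x_i ≤ max{ e^{−ε/6}, e^{−1/6} }. -/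
open Matrix BigOperators
open scoped ComplexOrder

noncomputable section

lemma key_log_bound {x : ℝ} (hx : 0 < x) :
    Real.log x ≤ (x - 1) - min ((x - 1) ^ 2) 1 / 6 := by
  set u := Real.sqrt x with hu
  have hu0 : 0 ≤ u := Real.sqrt_nonneg x
  have hux : u ^ 2 = x := Real.sq_sqrt hx.le
  have hup : 0 < u := by positivity
  have hlog : Real.log x = 2 * Real.log u := by
    rw [← hux, Real.log_pow]; push_cast; ring
  have hlu : Real.log u ≤ u - 1 := Real.log_le_sub_one_of_pos hup
  have h2 : Real.log x ≤ 2 * (u - 1) := by rw [hlog]; linarith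
  rcases le_total x 2 with hc | hc
  · have hmin : min ((x - 1) ^ 2) 1 = (x - 1) ^ 2 := by
      apply min_eq_left
      nlinarith [mul_nonneg hx.le (sub_nonneg.mpr hc)]
    rw [hmin]
    have hu2 : u ^ 2 ≤ 2 := by rw [hux]; exact hc
    nlinarith [sq_nonneg (u - 1), sq_nonneg (2*u - 3), mul_nonneg (sq_nonneg (u-1)) (sq_nonneg (u-1)), sq_nonneg ((u-1)*(u+1)), mul_nonneg (mul_nonneg (sq_nonneg (u-1)) hu0) hu0]
  · have hmin : min ((x - 1) ^ 2) 1 = 1 := by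
      apply min_eq_right; nlinarith
    rw [hmin]
    have hu2 : 2 ≤ u ^ 2 := by rw [hux]; exact hc
    nlinarith [sq_nonneg (2*u - 3)]

/-- Claim 2.11: quantitative AM-GM inequality. -/
theorem quantitative_AMGM {s : ℕ} (hs : 1 ≤ s) (x : Fin s → ℝ) (ε : ℝ)
    (hpos : ∀ i, 0 < x i)
    (hsum : ∑ i, x i = (s : ℝ))
    (hvar : ∑ i, (x i - 1) ^ 2 = ε) :
    ∏ i, x i ≤ max (Real.exp (-ε / 6)) (Real.exp (-1 / 6)) := by
  have hprod : ∏ i, x i = Real.exp (∑ i, Real.log (x i)) := by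
    rw [Real.exp_sum]
    exact (Finset.prod_congr rfl fun i _ => (Real.exp_log (hpos i)).symm)
  have hminsum : min ε 1 ≤ ∑ i, min ((x i - 1) ^ 2) 1 := by
    by_cases hall : ∀ i, (x i - 1) ^ 2 ≤ 1
    · calc min ε 1 ≤ ε := min_le_left _ _
        _ = ∑ i, (x i - 1) ^ 2 := hvar.symm
        _ = ∑ i, min ((x i - 1) ^ 2) 1 :=
          Finset.sum_congr rfl fun i _ => (min_eq_left (hall i)).symm
    · push_neg at hall
      obtain ⟨j, hj⟩ := hall
      calc min ε 1 ≤ 1 := min_le_right _ _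
        _ = min ((x j - 1) ^ 2) 1 := (min_eq_right hj.le).symm
        _ ≤ ∑ i, min ((x i - 1) ^ 2) 1 := by
          apply Finset.single_le_sum (f := fun i => min ((x i - 1) ^ 2) 1)
          · intro i _; positivity
          · exact Finset.mem_univ j
  have hlogsum : ∑ i, Real.log (x i) ≤ -(min ε 1) / 6 := by
    have h1 : ∑ i, Real.log (x i) ≤ ∑ i, ((x i - 1) - min ((x i - 1) ^ 2) 1 / 6) :=
      Finset.sum_le_sum fun i _ => key_log_bound (hpos i)
    rw [Finset.sum_sub_distrib, Finset.sum_sub_distrib] at h1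
    simp only [Finset.sum_const, Finset.card_univ, Fintype.card_fin, nsmul_eq_mul, mul_one] at h1
    rw [← Finset.sum_div] at h1
    linarith
  rw [hprod]
  have : max (Real.exp (-ε / 6)) (Real.exp (-1 / 6)) = Real.exp (max (-ε / 6) (-1 / 6)) := by
    rcases le_total (-ε/6) (-1/6 : ℝ) with h | h
    · rw [max_eq_right h, max_eq_right (Real.exp_le_exp.mpr h)]
    · rw [max_eq_left h, max_eq_left (Real.exp_le_exp.mpr h)]
  rw [this]
  apply Real.exp_le_exp.mpr
  have : -(min ε 1) / 6 ≤ max (-ε / 6) (-1 / 6) := by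
    rcases le_total ε 1 with h | h
    · rw [min_eq_left h]; exact le_max_left _ _
    · rw [min_eq_right h]; exact le_max_right _ _
  linarith
end
end

section
/- Let A_1,…,A_s ∈ M_{m,n}(r,c) and let M ∈ M_{sm,sn}(r,c) be the block-diagonal matrix whose ith diagonal m×n block of blocks is A_i and whose off-diagonal blocks are all zero (i.e., M_{(u−1)m+i,(v−1)n+j} equals (A_u)_{ij} when u = v and is the zero r×c block when u ≠ v). Then cap(M) = Π_{i=1}^s cap(A_i). In particular, if every cap(A_i) > 0 then cap(M) > 0. -/
/-
Block-diagonality makes the capacity objective of `M` at a tuple `X` factor as the product of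
the objectives of the blocks `A u` at the sub-tuples `X (finPair u ·)`. Feasible tuples for the
blocks therefore glue to a feasible tuple for `M`, so `cap M ≤ ∏ u, cap (A u)`. Conversely, the
sub-tuples of a feasible tuple for `M` have determinant products `d u` with `∏ u, d u = 1`;
rescaling the `u`-th sub-tuple by `d u ^ (-1 / (m * r))` makes it feasible for `A u` and scales its
objective by `d u ^ (-(c * n) / (m * r))`, and these factors multiply to `1`.
-/

open Matrix BigOperators
open scoped ComplexOrder

noncomputable section

/-- The index `u * m + i` in `Fin (s * m)`. -/
def finPair {s m : ℕ} (u : Fin s) (i : Fin m) : Fin (s * m) :=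
  ⟨u.1 * m + i.1, by
    calc u.1 * m + i.1 < u.1 * m + m := Nat.add_lt_add_left i.isLt _
    _ = (u.1 + 1) * m := by ring
    _ ≤ s * m := Nat.mul_le_mul_right m u.isLt⟩


theorem le_prod_csInf {ι : Type*} [Fintype ι] {S : ι → Set ℝ} (hne : ∀ i, (S i).Nonempty)
    (hbdd : ∀ i, BddBelow (S i)) {a : ℝ} (h : ∀ z : ι → ℝ, (∀ i, z i ∈ S i) → a ≤ ∏ i, z i) :
    a ≤ ∏ i, sInf (S i) := by
  have hclosed : IsClosed {z : ι → ℝ | a ≤ ∏ i, z i} :=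
    isClosed_le continuous_const (continuous_finsetProd _ fun i _ => continuous_apply i)
  have hmem : (fun i => sInf (S i)) ∈ closure (Set.univ.pi S) := by
    rw [closure_pi_set]
    exact fun i _ => csInf_mem_closure (hne i) (hbdd i)
  exact closure_minimal (fun z hz => h z (Set.mem_univ_pi.1 hz)) hclosed hmem

theorem Matrix.PosDef.ofReal_re_det {ι : Type*} [Fintype ι] [DecidableEq ι]
    {X : Matrix ι ι ℂ} (hX : X.PosDef) : ((X.det.re : ℝ) : ℂ) = X.det :=
  (Complex.eq_re_of_ofReal_le (r := 0) (by simpa using hX.det_pos.le)).symm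

theorem Matrix.PosDef.re_det_pos {ι : Type*} [Fintype ι] [DecidableEq ι]
    {X : Matrix ι ι ℂ} (hX : X.PosDef) : 0 < X.det.re :=
  (Complex.pos_iff.1 hX.det_pos).1

theorem finPair_eq_finProdFinEquiv {s m : ℕ} (u : Fin s) (i : Fin m) :
    finPair u i = finProdFinEquiv (u, i) :=
  Fin.ext (by simp [finPair, finProdFinEquiv, add_comm, mul_comm])

@[to_additive]
theorem prod_finPair {s m : ℕ} {β : Type*} [CommMonoid β] (f : Fin (s * m) → β) :
    ∏ k, f k = ∏ u, ∏ i, f (finPair u i) := by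
  simp_rw [finPair_eq_finProdFinEquiv, ← Fintype.prod_prod_type', Equiv.prod_comp]

section Capacity

variable {m n r c : ℕ} (A : Fin m → Fin n → Matrix (Fin r) (Fin c) ℂ)

def capValue (X : Fin m → Matrix (Fin r) (Fin r) ℂ) : ℝ :=
  ∏ j, ((((n : ℂ) * c / ((m : ℂ) * r)) • ∑ i, (A i j)ᴴ * X i * A i j).det).re

def capSet : Set ℝ :=
  {z | ∃ X : Fin m → Matrix (Fin r) (Fin r) ℂ,
    (∀ i, (X i).PosDef) ∧ (∏ i, (X i).det) = 1 ∧ z = capValue A X}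

theorem capValue_nonneg {X : Fin m → Matrix (Fin r) (Fin r) ℂ} (hX : ∀ i, (X i).PosSemidef) :
    0 ≤ capValue A X := by
  refine Finset.prod_nonneg fun j _ => (Complex.nonneg_iff.1 (PosSemidef.det_nonneg ?_)).1
  have hscale : (0 : ℂ) ≤ (n : ℂ) * c / ((m : ℂ) * r) := by
    have h := Complex.zero_le_real.2 (by positivity : (0 : ℝ) ≤ n * c / (m * r))
    push_cast at h
    exact h
  refine PosSemidef.smul ?_ hscale
  exact posSemidef_sum _ fun i _ => (hX i).conjTranspose_mul_mul_same _

theorem capSet_nonempty : (capSet A).Nonempty :=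
  ⟨_, fun _ => 1, fun _ => PosDef.one, by simp, rfl⟩

theorem capSet_nonneg : ∀ z ∈ capSet A, 0 ≤ z := by
  rintro _ ⟨X, hX, -, rfl⟩
  exact capValue_nonneg A fun i => (hX i).posSemidef

theorem bddBelow_capSet : BddBelow (capSet A) := ⟨0, capSet_nonneg A⟩

theorem cap_nonneg : 0 ≤ cap A := Real.sInf_nonneg (capSet_nonneg A)

theorem cap_le_capValue {X : Fin m → Matrix (Fin r) (Fin r) ℂ} (hX : ∀ i, (X i).PosDef)
    (hdet : ∏ i, (X i).det = 1) : cap A ≤ capValue A X :=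
  csInf_le (bddBelow_capSet A) ⟨X, hX, hdet, rfl⟩

theorem capValue_smul (t : ℝ) (X : Fin m → Matrix (Fin r) (Fin r) ℂ) :
    capValue A (fun i => (t : ℂ) • X i) = t ^ (c * n) * capValue A X := by
  have hdet : ∀ j, ((((n : ℂ) * c / ((m : ℂ) * r)) •
      ∑ i, (A i j)ᴴ * ((t : ℂ) • X i) * A i j).det).re
      = t ^ c * ((((n : ℂ) * c / ((m : ℂ) * r)) • ∑ i, (A i j)ᴴ * X i * A i j).det).re := by
    intro j
    simp_rw [Matrix.mul_smul, Matrix.smul_mul, ← Finset.smul_sum]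
    rw [smul_comm, det_smul, Fintype.card_fin, ← Complex.ofReal_pow, Complex.re_ofReal_mul]
  simp only [capValue, hdet, Finset.prod_mul_distrib, Finset.prod_const, Finset.card_univ,
    Fintype.card_fin, pow_mul]

theorem cap_le_rpow_mul_capValue {X : Fin m → Matrix (Fin r) (Fin r) ℂ}
    (hX : ∀ i, (X i).PosDef) :
    cap A ≤ (∏ i, (X i).det.re) ^ (-((c * n : ℕ) : ℝ) / (m * r)) * capValue A X := by
  set d := ∏ i, (X i).det.re with hd_def
  have hdet : ∏ i, (X i).det = d := by
    rw [hd_def, Complex.ofReal_prod]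
    exact Finset.prod_congr rfl fun i _ => ((hX i).ofReal_re_det).symm
  have hd : 0 < d := Finset.prod_pos fun i _ => (hX i).re_det_pos
  by_cases hmr : m * r = 0
  -- then `d` is an empty product or a product of `0 × 0` determinants, and the exponent is `0`
  · have hd1 : d = 1 := by
      apply Complex.ofReal_injective
      rw [← hdet, Complex.ofReal_one]
      rcases Nat.mul_eq_zero.1 hmr with rfl | rfl <;> simp
    simpa [hd1] using cap_le_capValue A hX (by rw [hdet, hd1, Complex.ofReal_one])
  set t := d ^ (-1 / ((m * r : ℕ) : ℝ)) with ht_def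
  have htd : t ^ (m * r) * d = 1 := by
    rw [ht_def, ← Real.rpow_natCast, ← Real.rpow_mul hd.le, div_mul_cancel₀ _ (by exact_mod_cast hmr),
      Real.rpow_neg_one, inv_mul_cancel₀ hd.ne']
  have hdet_t : ∏ i, ((t : ℂ) • X i).det = 1 := by
    simp only [det_smul, Fintype.card_fin, Finset.prod_mul_distrib, Finset.prod_const,
      Finset.card_univ, hdet]
    rw [← pow_mul, mul_comm r m]
    exact_mod_cast htd
  calc cap A ≤ capValue A (fun i => (t : ℂ) • X i) :=
        cap_le_capValue A (fun i => (hX i).smul (Complex.zero_lt_real.2 (Real.rpow_pos_of_pos hd _)))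
          hdet_t
    _ = t ^ (c * n) * capValue A X := capValue_smul A t X
    _ = d ^ (-((c * n : ℕ) : ℝ) / (m * r)) * capValue A X := by
        rw [ht_def, ← Real.rpow_natCast, ← Real.rpow_mul hd.le]
        congr 2
        push_cast
        ring

end Capacity

section BlockDiagonal

variable {s m n r c : ℕ}

def IsBlockDiagonal (A : Fin s → Fin m → Fin n → Matrix (Fin r) (Fin c) ℂ)
    (M : Fin (s * m) → Fin (s * n) → Matrix (Fin r) (Fin c) ℂ) : Prop :=
  ∀ u i u' j, M (finPair u i) (finPair u' j) = if u = u' then A u i j else 0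

theorem capValue_of_isBlockDiagonal {A : Fin s → Fin m → Fin n → Matrix (Fin r) (Fin c) ℂ}
    {M : Fin (s * m) → Fin (s * n) → Matrix (Fin r) (Fin c) ℂ} (hM : IsBlockDiagonal A M)
    (X : Fin (s * m) → Matrix (Fin r) (Fin r) ℂ) :
    capValue M X = ∏ u, capValue (A u) (fun i => X (finPair u i)) := by
  rw [capValue, prod_finPair]
  refine Finset.prod_congr rfl fun u _ => Finset.prod_congr rfl fun j _ => ?_
  have hscale : ((s * n : ℕ) : ℂ) * c / ((s * m : ℕ) * r) = (n : ℂ) * c / ((m : ℂ) * r) := by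
    have hs : (s : ℂ) ≠ 0 := Nat.cast_ne_zero.2 u.pos.ne'
    push_cast
    rw [mul_assoc, mul_assoc, mul_div_mul_left _ _ hs]
  have hsum : ∑ k, (M k (finPair u j))ᴴ * X k * M k (finPair u j)
      = ∑ i, (A u i j)ᴴ * X (finPair u i) * A u i j := by
    rw [sum_finPair, Finset.sum_eq_single_of_mem u (Finset.mem_univ u)
      (fun v _ hv => by simp [fun i => hM v i u j, hv])]
    simp [fun i => hM u i u j]
  rw [hscale, hsum]

end BlockDiagonal

theorem cap_blockDiagonal_general {s m n r c : ℕ}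
    (A : Fin s → Fin m → Fin n → Matrix (Fin r) (Fin c) ℂ)
    (M : Fin (s * m) → Fin (s * n) → Matrix (Fin r) (Fin c) ℂ)
    (hM : ∀ (u : Fin s) (i : Fin m) (u' : Fin s) (j : Fin n),
      M (finPair u i) (finPair u' j) = if u = u' then A u i j else 0) :
    cap M = ∏ u, cap (A u) := by
  apply le_antisymm
  · refine le_prod_csInf (fun u => capSet_nonempty (A u)) (fun u => bddBelow_capSet (A u)) ?_
    intro z hz
    choose X hX hdet hz using hz
    set Y := Function.uncurry X ∘ finProdFinEquiv.symm
    have hY : ∀ u i, Y (finPair u i) = X u i := fun u i => by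
      simp only [Y, Function.comp_apply, finPair_eq_finProdFinEquiv, Equiv.symm_apply_apply,
        Function.uncurry_apply_pair]
    calc cap M ≤ capValue M Y :=
          cap_le_capValue M (fun k => hX _ _) (by simp [prod_finPair, hY, hdet])
      _ = ∏ u, z u := by simp [capValue_of_isBlockDiagonal hM, hY, hz]
  · refine le_csInf (capSet_nonempty M) ?_
    rintro _ ⟨X, hX, hdet, rfl⟩
    set d : Fin s → ℝ := fun u => ∏ i, (X (finPair u i)).det.re
    have hd : ∏ u, d u = 1 := by
      apply Complex.ofReal_injective
      simp only [d, Complex.ofReal_prod, fun k => (hX k).ofReal_re_det, Complex.ofReal_one]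
      exact (prod_finPair fun k => (X k).det).symm.trans hdet
    calc ∏ u, cap (A u)
        ≤ ∏ u, d u ^ (-((c * n : ℕ) : ℝ) / (m * r)) * capValue (A u) (fun i => X (finPair u i)) :=
          Finset.prod_le_prod (fun u _ => cap_nonneg _)
            (fun u _ => cap_le_rpow_mul_capValue _ fun i => hX _)
      _ = capValue M X := by
          rw [Finset.prod_mul_distrib, Real.finsetProd_rpow _ _ fun u _ => ?_, hd, Real.one_rpow,
            one_mul, capValue_of_isBlockDiagonal hM]
          exact Finset.prod_nonneg fun i _ => (hX _).re_det_pos.le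

/-- Claim 2.14: the capacity of a block-diagonal matrix is the product of the capacities of
its diagonal blocks. -/
theorem cap_blockDiagonal {s m n r c : ℕ}
    (hs : 0 < s) (hm : 0 < m) (hn : 0 < n) (hr : 0 < r) (hc : 0 < c)
    (A : Fin s → Fin m → Fin n → Matrix (Fin r) (Fin c) ℂ)
    (M : Fin (s * m) → Fin (s * n) → Matrix (Fin r) (Fin c) ℂ)
    (hM : ∀ (u : Fin s) (i : Fin m) (u' : Fin s) (j : Fin n),
      M (finPair u i) (finPair u' j) = if u = u' then A u i j else 0) :
    cap M = ∏ u, cap (A u) :=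
  cap_blockDiagonal_general A M hM
end
end

section
/- Let A ∈ M_{m,n}(r,c) be a (q,k,t)-design matrix. Then there exists a (q,k,tq)-design matrix B ∈ M_{nk,n}(r,c) in regular form, each of whose rows of blocks equals some row of blocks of A, such that rank(B) ≤ rank(A). -/
open Matrix BigOperators
open scoped ComplexOrder

noncomputable section

/-- The underlying `(r*m) x (c*n)` scalar matrix of a block matrix. -/
def flattenBlocks {m n r c : ℕ} (A : Fin m → Fin n → Matrix (Fin r) (Fin c) ℂ) :
    Matrix (Fin m × Fin r) (Fin n × Fin c) ℂ :=
  fun p q => A p.1 q.1 p.2 q.2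

/-- The rank of a block matrix: the rank of the underlying scalar matrix. -/
def blockRank {m n r c : ℕ} (A : Fin m → Fin n → Matrix (Fin r) (Fin c) ℂ) : ℕ :=
  (flattenBlocks A).rank

/-- `A` is a `(q,k,t)`-design matrix: each row has at most `q` nonzero blocks, each column
contains `k` blocks (in distinct rows) forming a well-spread set, and the supports of any two
distinct columns intersect in at most `t` rows. -/
def IsDesign {m n r c : ℕ} (q k t : ℕ)
    (A : Fin m → Fin n → Matrix (Fin r) (Fin c) ℂ) : Prop :=
  (∀ i : Fin m, ({j : Fin n | A i j ≠ 0}).ncard ≤ q) ∧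
  (∀ j : Fin n, ∃ f : Fin k → Fin m, Function.Injective f ∧
      WellSpread (fun l => A (f l) j)) ∧
  (∀ j j' : Fin n, j ≠ j' → ({i : Fin m | A i j ≠ 0 ∧ A i j' ≠ 0}).ncard ≤ t)

/-- A design matrix `B ∈ M_{n*k, n}(r,c)` is in regular form if, for each column `i`, the `k`
blocks in rows `i*k, …, i*k + (k-1)` of column `i` form a well-spread set. -/
def RegularForm {n k r c : ℕ} (B : Fin (n * k) → Fin n → Matrix (Fin r) (Fin c) ℂ) : Prop :=
  ∀ i : Fin n, WellSpread (fun l : Fin k => B (finPair i l) i)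


lemma wellSpread_ne_zero {r c k : ℕ} (hr : 0 < r) (hc : 0 < c)
    {B : Fin k → Matrix (Fin r) (Fin c) ℂ} (h : WellSpread B) (l : Fin k) : B l ≠ 0 := by
  intro hl
  have htop := h ⊤
  rw [finrank_top, Module.finrank_fin_fun] at htop
  set d : Fin k → ℝ := fun i =>
    ((Module.finrank ℂ ((⊤ : Submodule ℂ (Fin c → ℂ)).map (B i).mulVecLin) : ℝ)) with hd
  have hterm : ∀ i, d i ≤ (r : ℝ) := by
    intro i
    have : Module.finrank ℂ ((⊤ : Submodule ℂ (Fin c → ℂ)).map (B i).mulVecLin) ≤ r := by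
      have := Submodule.finrank_le ((⊤ : Submodule ℂ (Fin c → ℂ)).map (B i).mulVecLin)
      rwa [Module.finrank_fin_fun] at this
    show ((Module.finrank ℂ ((⊤ : Submodule ℂ (Fin c → ℂ)).map (B i).mulVecLin) : ℕ) : ℝ) ≤ (r : ℝ)
    exact_mod_cast this
  have hl0 : d l = 0 := by
    simp [hd, hl, Matrix.mulVecLin_zero, Submodule.map_zero]
  have hsum : ∑ i, d i ≤ ((k : ℝ) - 1) * r := by
    rw [← Finset.sum_erase_add Finset.univ d (Finset.mem_univ l), hl0, add_zero]
    have := Finset.sum_le_card_nsmul (Finset.univ.erase l) d (r : ℝ) (fun x _ => hterm x)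
    have hcard : (Finset.univ.erase l).card = k - 1 := by
      rw [Finset.card_erase_of_mem (Finset.mem_univ l), Finset.card_univ, Fintype.card_fin]
    rw [hcard] at this
    have hk1 : 1 ≤ k := l.pos
    calc ∑ x ∈ Finset.univ.erase l, d x ≤ (k - 1) • (r : ℝ) := this
      _ = ((k : ℝ) - 1) * r := by
          rw [nsmul_eq_mul, Nat.cast_sub hk1, Nat.cast_one]
  have hLHS : ((r : ℝ) * k / c) * (c : ℝ) = (r : ℝ) * k := by
    field_simp
  rw [hLHS] at htop
  have hle := le_trans htop hsum
  have hr' : (0 : ℝ) < r := by exact_mod_cast hr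
  nlinarith [hle, hr']

/-- Claim 3.2: regularization of a design matrix. -/
theorem regularize_design {m n r c q k t : ℕ}
    (hm : 0 < m) (hn : 0 < n) (hr : 0 < r) (hc : 0 < c) (hk : 0 < k)
    (A : Fin m → Fin n → Matrix (Fin r) (Fin c) ℂ)
    (hA : IsDesign q k t A) :
    ∃ B : Fin (n * k) → Fin n → Matrix (Fin r) (Fin c) ℂ,
      IsDesign q k (t * q) B ∧ RegularForm B ∧
      (∀ a : Fin (n * k), ∃ i : Fin m, ∀ j, B a j = A i j) ∧
      blockRank B ≤ blockRank A := by
  classical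
  obtain ⟨hrow, hcol, hpair⟩ := hA
  choose f hfinj hfws using hcol
  have hdiv : ∀ a : Fin (n * k), a.1 / k < n := fun a =>
    (Nat.div_lt_iff_lt_mul hk).2 a.2
  set col : Fin (n * k) → Fin n := fun a => ⟨a.1 / k, hdiv a⟩ with hcoldef
  set idx : Fin (n * k) → Fin k := fun a => ⟨a.1 % k, Nat.mod_lt _ hk⟩ with hidxdef
  set g : Fin (n * k) → Fin m := fun a => f (col a) (idx a) with hgdef
  set B : Fin (n * k) → Fin n → Matrix (Fin r) (Fin c) ℂ := fun a j => A (g a) j with hBdef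
  have hcolP : ∀ (i : Fin n) (l : Fin k), col (finPair i l) = i := by
    intro i l
    apply Fin.ext
    show (i.1 * k + l.1) / k = i.1
    rw [Nat.add_comm, Nat.add_mul_div_right _ _ hk, Nat.div_eq_of_lt l.2, Nat.zero_add]
  have hidxP : ∀ (i : Fin n) (l : Fin k), idx (finPair i l) = l := by
    intro i l
    apply Fin.ext
    show (i.1 * k + l.1) % k = l.1
    rw [Nat.add_comm, Nat.add_mul_mod_self_right, Nat.mod_eq_of_lt l.2]
  have hgP : ∀ (i : Fin n) (l : Fin k), g (finPair i l) = f i l := by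
    intro i l
    rw [hgdef]
    simp only [hcolP, hidxP]
  have hrec : ∀ a : Fin (n * k), finPair (col a) (idx a) = a := by
    intro a
    apply Fin.ext
    show a.1 / k * k + a.1 % k = a.1
    rw [Nat.mul_comm]
    exact Nat.div_add_mod a.1 k
  have hBnz : ∀ a : Fin (n * k), A (g a) (col a) ≠ 0 := by
    intro a
    exact wellSpread_ne_zero hr hc (hfws (col a)) (idx a)
  have hWS : ∀ i : Fin n, WellSpread (fun l : Fin k => B (finPair i l) i) := by
    intro i
    have : (fun l : Fin k => B (finPair i l) i) = fun l : Fin k => A (f i l) i := by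
      funext l
      rw [hBdef]
      simp only [hgP]
    rw [this]
    exact hfws i
  refine ⟨B, ⟨?_, ?_, ?_⟩, hWS, fun a => ⟨g a, fun j => rfl⟩, ?_⟩
  · -- rows
    intro a
    exact hrow (g a)
  · -- columns
    intro j
    refine ⟨fun l => finPair j l, ?_, hWS j⟩
    intro l l' h
    have h' : finPair j l = finPair j l' := h
    have h1 := hidxP j l
    have h2 := hidxP j l'
    rw [h'] at h1
    exact h1.symm.trans h2
  · -- pairs
    intro j j' hjj'
    rw [Set.ncard_eq_toFinset_card']
    set S : Set (Fin (n * k)) := {a | B a j ≠ 0 ∧ B a j' ≠ 0} with hS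
    have hfiber : ∀ b ∈ Finset.image g S.toFinset,
        (Finset.filter (fun a => g a = b) S.toFinset).card ≤ q := by
      intro b _
      have hsub : ∀ a ∈ Finset.filter (fun a => g a = b) S.toFinset,
          col a ∈ ({j'' : Fin n | A b j'' ≠ 0}).toFinset := by
        intro a ha
        rw [Finset.mem_filter] at ha
        rw [Set.mem_toFinset]
        rw [← ha.2]
        exact hBnz a
      have hinj : Set.InjOn col (Finset.filter (fun a => g a = b) S.toFinset : Set (Fin (n * k))) := by
        intro a ha a' ha' hcc
        simp only [Finset.coe_filter, Set.mem_setOf_eq] at ha ha'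
        have hgg : g a = g a' := ha.2.trans ha'.2.symm
        rw [hgdef] at hgg
        simp only at hgg
        rw [hcc] at hgg
        have : idx a = idx a' := hfinj (col a') hgg
        rw [← hrec a, ← hrec a', hcc, this]
      have := Finset.card_le_card_of_injOn col hsub hinj
      calc (Finset.filter (fun a => g a = b) S.toFinset).card
          ≤ ({j'' : Fin n | A b j'' ≠ 0}).toFinset.card := this
        _ = ({j'' : Fin n | A b j'' ≠ 0}).ncard := (Set.ncard_eq_toFinset_card' _).symm
        _ ≤ q := hrow b
    have himg : (Finset.image g S.toFinset).card ≤ t := by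
      have hsub : Finset.image g S.toFinset ⊆ ({i : Fin m | A i j ≠ 0 ∧ A i j' ≠ 0}).toFinset := by
        intro b hb
        rw [Finset.mem_image] at hb
        obtain ⟨a, ha, rfl⟩ := hb
        rw [Set.mem_toFinset] at ha ⊢
        exact ha
      calc (Finset.image g S.toFinset).card
          ≤ ({i : Fin m | A i j ≠ 0 ∧ A i j' ≠ 0}).toFinset.card := Finset.card_le_card hsub
        _ = ({i : Fin m | A i j ≠ 0 ∧ A i j' ≠ 0}).ncard := (Set.ncard_eq_toFinset_card' _).symm
        _ ≤ t := hpair j j' hjj'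
    calc S.toFinset.card ≤ q * (Finset.image g S.toFinset).card :=
          Finset.card_le_mul_card_image S.toFinset q hfiber
      _ ≤ q * t := Nat.mul_le_mul_left q himg
      _ = t * q := Nat.mul_comm q t
  · -- rank
    show (flattenBlocks B).rank ≤ (flattenBlocks A).rank
    have hcomp : (flattenBlocks B).mulVecLin =
        (LinearMap.funLeft ℂ ℂ (fun p : Fin (n * k) × Fin r => (g p.1, p.2))) ∘ₗ
          (flattenBlocks A).mulVecLin := by
      apply LinearMap.ext
      intro x
      funext p
      simp [flattenBlocks, Matrix.mulVecLin_apply, Matrix.mulVec, dotProduct,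
        LinearMap.funLeft, hBdef]
    show Module.finrank ℂ (LinearMap.range (flattenBlocks B).mulVecLin) ≤
      Module.finrank ℂ (LinearMap.range (flattenBlocks A).mulVecLin)
    rw [hcomp, LinearMap.range_comp]
    exact Submodule.finrank_map_le _ _
end
end

section
/- Let H be an n×n Hermitian complex matrix such that every diagonal entry satisfies H_{ii} ≥ L for some real L > 0, and let S = Σ_{i≠j} |H_{ij}|². Then rank(H) ≥ L²n²/(nL² + S) = n − nS/(nL² + S). -/
open Matrix BigOperators
open scoped ComplexOrder

noncomputable section

/-!
With `D` the diagonal of `H`, the matrix `A = D^{-1/2} H D^{-1/2}` is Hermitian, has the rank of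
`H`, unit diagonal, and off-diagonal entries `H i j / √(H i i * H j j)`, so that `tr A = n` and
`L² ‖A‖_F² ≤ n L² + S`. For a Hermitian `A`, Cauchy–Schwarz over its nonzero eigenvalues gives
`(tr A)² ≤ rank A · ∑ λᵢ² = rank A · ‖A‖_F²`.
-/

theorem sq_sum_le_card_ne_zero_mul_sum_sq {ι R : Type*} [Fintype ι] [Field R] [LinearOrder R]
    [IsStrictOrderedRing R] (f : ι → R) :
    (∑ i, f i) ^ 2 ≤ Fintype.card {i // f i ≠ 0} * ∑ i, f i ^ 2 := by
  classical
  rw [Fintype.card_subtype, ← Finset.sum_filter_ne_zero]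
  refine sq_sum_le_card_mul_sum_sq.trans ?_
  exact mul_le_mul_of_nonneg_left (Finset.sum_le_univ_sum_of_nonneg fun i => sq_nonneg (f i))
    (Nat.cast_nonneg _)

namespace Matrix

variable {𝕜 ι : Type*} [RCLike 𝕜]

theorem IsHermitian.trace_mul_self_eq_sum_norm_sq [Fintype ι] {A : Matrix ι ι 𝕜}
    (hA : A.IsHermitian) :
    (A * A).trace = ∑ i, ∑ j, ((‖A i j‖ ^ 2 : ℝ) : 𝕜) := by
  nth_rewrite 2 [← hA.eq]
  simp [trace, mul_apply, RCLike.mul_conj]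

variable [DecidableEq ι]

def invSqrtDiag (H : Matrix ι ι 𝕜) : Matrix ι ι 𝕜 :=
  diagonal fun i => ((√(RCLike.re (H i i)))⁻¹ : ℝ)

theorem isHermitian_invSqrtDiag (H : Matrix ι ι 𝕜) : (invSqrtDiag H).IsHermitian :=
  isHermitian_diagonal_iff.mpr fun i => by simp [IsSelfAdjoint]

variable [Fintype ι]

theorem IsHermitian.trace_mul_self_eq_sum_eigenvalues_sq {A : Matrix ι ι 𝕜}
    (hA : A.IsHermitian) :
    (A * A).trace = ∑ i, ((hA.eigenvalues i ^ 2 : ℝ) : 𝕜) := by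
  conv_lhs => rw [hA.spectral_theorem, ← map_mul, Unitary.conjStarAlgAut_apply, trace_mul_cycle,
    Unitary.coe_star_mul_self, one_mul, diagonal_mul_diagonal, trace_diagonal]
  simp [sq]

theorem IsHermitian.sum_norm_sq_eq_sum_eigenvalues_sq {A : Matrix ι ι 𝕜} (hA : A.IsHermitian) :
    ∑ i, ∑ j, ‖A i j‖ ^ 2 = ∑ i, hA.eigenvalues i ^ 2 := by
  have := hA.trace_mul_self_eq_sum_norm_sq.symm.trans hA.trace_mul_self_eq_sum_eigenvalues_sq
  exact_mod_cast this

theorem IsHermitian.sq_re_trace_le_rank_mul_sum_norm_sq {A : Matrix ι ι 𝕜}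
    (hA : A.IsHermitian) :
    RCLike.re A.trace ^ 2 ≤ A.rank * ∑ i, ∑ j, ‖A i j‖ ^ 2 := by
  have htrace : RCLike.re A.trace = ∑ i, hA.eigenvalues i := by
    simp [hA.trace_eq_sum_eigenvalues]
  rw [htrace, hA.sum_norm_sq_eq_sum_eigenvalues_sq, hA.rank_eq_card_non_zero_eigs]
  exact sq_sum_le_card_ne_zero_mul_sum_sq _

theorem IsHermitian.invSqrtDiag_mul_mul {H : Matrix ι ι 𝕜} (hH : H.IsHermitian) :
    (invSqrtDiag H * H * invSqrtDiag H).IsHermitian := by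
  have := isHermitian_conjTranspose_mul_mul (invSqrtDiag H) hH
  rwa [(isHermitian_invSqrtDiag H).eq] at this

theorem invSqrtDiag_mul_mul_apply (H : Matrix ι ι 𝕜) (i j : ι) :
    (invSqrtDiag H * H * invSqrtDiag H) i j =
      ((√(RCLike.re (H i i)))⁻¹ : ℝ) * H i j * ((√(RCLike.re (H j j)))⁻¹ : ℝ) := by
  simp only [invSqrtDiag, mul_diagonal, diagonal_mul]

theorem rank_invSqrtDiag_mul_mul {H : Matrix ι ι 𝕜} (hpos : ∀ i, 0 < RCLike.re (H i i)) :
    (invSqrtDiag H * H * invSqrtDiag H).rank = H.rank := by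
  have hunit : IsUnit (invSqrtDiag H).det := by
    simp [invSqrtDiag, det_diagonal, Finset.prod_ne_zero_iff,
      fun i => (Real.sqrt_pos.mpr (hpos i)).ne']
  rw [rank_mul_eq_left_of_isUnit_det _ _ hunit, rank_mul_eq_right_of_isUnit_det _ _ hunit]

theorem IsHermitian.invSqrtDiag_mul_mul_apply_self {H : Matrix ι ι 𝕜} (hH : H.IsHermitian)
    {i : ι} (hi : 0 < RCLike.re (H i i)) : (invSqrtDiag H * H * invSqrtDiag H) i i = 1 := by
  have hsqrt : √(RCLike.re (H i i)) ^ 2 = RCLike.re (H i i) := Real.sq_sqrt hi.le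
  rw [invSqrtDiag_mul_mul_apply, ← hH.coe_re_apply_self i]
  norm_cast
  field_simp
  exact hsqrt.symm

theorem norm_invSqrtDiag_mul_mul_apply_sq {H : Matrix ι ι 𝕜}
    (hnonneg : ∀ i, 0 ≤ RCLike.re (H i i)) (i j : ι) :
    ‖(invSqrtDiag H * H * invSqrtDiag H) i j‖ ^ 2 =
      ‖H i j‖ ^ 2 / (RCLike.re (H i i) * RCLike.re (H j j)) := by
  rw [invSqrtDiag_mul_mul_apply]
  simp only [norm_mul, RCLike.norm_ofReal, abs_inv, abs_of_nonneg (Real.sqrt_nonneg _), mul_pow,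
    inv_pow, Real.sq_sqrt (hnonneg _)]
  ring

theorem IsHermitian.sq_mul_sum_norm_invSqrtDiag_mul_mul_sq_le {H : Matrix ι ι 𝕜}
    (hH : H.IsHermitian) {L : ℝ} (hL : 0 < L) (hdiag : ∀ i, L ≤ RCLike.re (H i i)) :
    L ^ 2 * ∑ i, ∑ j, ‖(invSqrtDiag H * H * invSqrtDiag H) i j‖ ^ 2 ≤
      Fintype.card ι * L ^ 2 + ∑ i, ∑ j, if i = j then 0 else ‖H i j‖ ^ 2 := by
  have hpos : ∀ i, 0 < RCLike.re (H i i) := fun i => hL.trans_le (hdiag i)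
  have hentry : ∀ i j, L ^ 2 * ‖(invSqrtDiag H * H * invSqrtDiag H) i j‖ ^ 2 ≤
      (if i = j then L ^ 2 else 0) + if i = j then 0 else ‖H i j‖ ^ 2 := by
    intro i j
    split_ifs with hij
    · simp [hij, hH.invSqrtDiag_mul_mul_apply_self (hpos j)]
    · rw [zero_add, norm_invSqrtDiag_mul_mul_apply_sq fun k => (hpos k).le, mul_div_assoc',
        div_le_iff₀ (mul_pos (hpos i) (hpos j)), mul_comm]
      gcongr
      rw [sq]
      exact mul_le_mul (hdiag i) (hdiag j) hL.le (hpos i).le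
  calc _ = ∑ i, ∑ j, L ^ 2 * ‖(invSqrtDiag H * H * invSqrtDiag H) i j‖ ^ 2 := by
        simp only [Finset.mul_sum]
    _ ≤ ∑ i, ∑ j, ((if i = j then L ^ 2 else 0) + if i = j then 0 else ‖H i j‖ ^ 2) :=
        Finset.sum_le_sum fun i _ => Finset.sum_le_sum fun j _ => hentry i j
    _ = _ := by simp [Finset.sum_add_distrib]

end Matrix

/-- Lemma 3.5: rank lower bound for diagonal dominant Hermitian matrices. -/
theorem diag_dominant_rank {n : ℕ} (H : Matrix (Fin n) (Fin n) ℂ)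
    (hH : H.IsHermitian) (L : ℝ) (hL : 0 < L)
    (hdiag : ∀ i, L ≤ (H i i).re)
    (S : ℝ)
    (hS : S = ∑ i, ∑ j, if i = j then 0 else ‖H i j‖ ^ 2) :
    L ^ 2 * (n : ℝ) ^ 2 / ((n : ℝ) * L ^ 2 + S) ≤ (H.rank : ℝ) := by
  have hpos : ∀ i, 0 < (H i i).re := fun i => hL.trans_le (hdiag i)
  set A := invSqrtDiag H * H * invSqrtDiag H
  have htrace : RCLike.re A.trace = n := by
    simp [A, trace, hH.invSqrtDiag_mul_mul_apply_self (hpos _)]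
  have hcs := hH.invSqrtDiag_mul_mul.sq_re_trace_le_rank_mul_sum_norm_sq
  rw [htrace, rank_invSqrtDiag_mul_mul hpos] at hcs
  have hsum := hH.sq_mul_sum_norm_invSqrtDiag_mul_mul_sq_le hL hdiag
  rw [Fintype.card_fin, ← hS] at hsum
  have hS0 : 0 ≤ S := hS ▸ Finset.sum_nonneg fun i _ => Finset.sum_nonneg fun j _ => by
    split_ifs <;> positivity
  refine div_le_of_le_mul₀ (by positivity) (by positivity) ?_
  calc L ^ 2 * (n : ℝ) ^ 2 ≤ L ^ 2 * (H.rank * ∑ i, ∑ j, ‖A i j‖ ^ 2) := by gcongr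
    _ = H.rank * (L ^ 2 * ∑ i, ∑ j, ‖A i j‖ ^ 2) := by ring
    _ ≤ H.rank * (n * L ^ 2 + S) := by gcongr
end
end

section
/- Let C_1,…,C_q ∈ ℂ^{r×c} be matrices such that Σ_{i=1}^q C_i C_i* = I_r. Then Σ_{i≠j, i,j∈[q]} ‖C_i* C_j‖₂² ≤ r(1 − 1/q). -/
open Matrix BigOperators
open scoped ComplexOrder

noncomputable section

/-- `‖M‖₂² = tr (M M*)` for a square complex matrix. -/
def sqNorm {k : ℕ} (M : Matrix (Fin k) (Fin k) ℂ) : ℝ := ((M * Mᴴ).trace).re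

/-!
Put `Aᵢ = Cᵢ Cᵢ*`, Hermitian with `∑ Aᵢ = I`. Then `‖Cᵢ* Cⱼ‖₂² = tr (Aᵢ Aⱼ)`, and the sum over
all pairs is `tr (∑ Aᵢ)² = r`, so the cross terms are `r - ∑ tr Aᵢ²`. Two Cauchy–Schwarz steps,
`tr Aᵢ² ≥ (tr Aᵢ)² / r` and `∑ (tr Aᵢ)² ≥ (∑ tr Aᵢ)² / q = r² / q`, bound the diagonal from below
by `r / q`.
-/

theorem Fintype.sum_sum_ite_eq_zero_eq_sub {ι M : Type*} [Fintype ι] [DecidableEq ι]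
    [AddCommGroup M] (f : ι → ι → M) :
    (∑ i, ∑ j, if i = j then 0 else f i j) = ∑ i, ∑ j, f i j - ∑ i, f i i := by
  rw [← Finset.sum_sub_distrib]
  refine Finset.sum_congr rfl fun i _ => ?_
  rw [eq_sub_iff_add_eq, ← Fintype.sum_ite_eq i (f i), ← Finset.sum_add_distrib]
  exact Finset.sum_congr rfl fun j _ => by split_ifs <;> simp

namespace Matrix

variable {m n ι : Type*} [Fintype m] [Fintype n]

theorem re_trace_mul_conjTranspose_self (A : Matrix m n ℂ) :
    (A * Aᴴ).trace.re = ∑ i, ∑ j, Complex.normSq (A i j) := by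
  simp only [trace, diag, mul_apply, conjTranspose_apply, Complex.re_sum, Complex.star_def,
    Complex.mul_conj, Complex.ofReal_re]

theorem re_trace_mul_conjTranspose_self_nonneg (A : Matrix m n ℂ) :
    0 ≤ (A * Aᴴ).trace.re := by
  rw [re_trace_mul_conjTranspose_self]
  exact Finset.sum_nonneg fun i _ => Finset.sum_nonneg fun j _ => Complex.normSq_nonneg _

theorem re_trace_sq_le_card_mul_re_trace_mul_conjTranspose_self (A : Matrix n n ℂ) :
    A.trace.re ^ 2 ≤ Fintype.card n * (A * Aᴴ).trace.re := by
  have diag_le : ∑ k, (A k k).re ^ 2 ≤ (A * Aᴴ).trace.re := by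
    rw [re_trace_mul_conjTranspose_self]
    refine Finset.sum_le_sum fun k _ => ?_
    calc (A k k).re ^ 2 ≤ Complex.normSq (A k k) := by rw [sq]; exact Complex.re_sq_le_normSq _
      _ ≤ ∑ l, Complex.normSq (A k l) :=
        Finset.single_le_sum (fun l _ => Complex.normSq_nonneg _) (Finset.mem_univ k)
  calc A.trace.re ^ 2 = (∑ k, (A k k).re) ^ 2 := by simp only [trace, diag, Complex.re_sum]
    _ ≤ Fintype.card n * ∑ k, (A k k).re ^ 2 := sq_sum_le_card_mul_sum_sq
    _ ≤ Fintype.card n * (A * Aᴴ).trace.re := by gcongr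

theorem sum_sum_re_trace_mul_eq_card [DecidableEq n] [Fintype ι] (A : ι → Matrix n n ℂ)
    (hsum : ∑ i, A i = 1) :
    ∑ i, ∑ j, (A i * A j).trace.re = Fintype.card n := by
  have hsq : ∑ i, ∑ j, A i * A j = 1 := by rw [← Finset.sum_mul_sum, hsum, one_mul]
  simpa [trace_sum, Complex.re_sum] using congrArg (fun M => M.trace.re) hsq

theorem card_div_card_le_sum_re_trace_mul_self [DecidableEq n] [Fintype ι] (A : ι → Matrix n n ℂ)
    (hA : ∀ i, (A i).IsHermitian) (hsum : ∑ i, A i = 1) :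
    (Fintype.card n : ℝ) / Fintype.card ι ≤ ∑ i, (A i * A i).trace.re := by
  set D := ∑ i, (A i * A i).trace.re
  have hD : D = ∑ i, (A i * (A i)ᴴ).trace.re := by simp only [D, (hA _).eq]
  have hD_nonneg : 0 ≤ D :=
    hD ▸ Finset.sum_nonneg fun i _ => re_trace_mul_conjTranspose_self_nonneg _
  have htrace : ∑ i, (A i).trace.re = Fintype.card n := by
    simpa [trace_sum, Complex.re_sum] using congrArg (fun M => M.trace.re) hsum
  have hcs : (Fintype.card n : ℝ) ^ 2 ≤ Fintype.card ι * (Fintype.card n * D) :=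
    calc (Fintype.card n : ℝ) ^ 2 = (∑ i, (A i).trace.re) ^ 2 := by rw [htrace]
      _ ≤ Fintype.card ι * ∑ i, (A i).trace.re ^ 2 := sq_sum_le_card_mul_sum_sq
      _ ≤ Fintype.card ι * (Fintype.card n * D) := by
        rw [hD, Finset.mul_sum _ _ (Fintype.card n : ℝ)]
        gcongr with i
        exact re_trace_sq_le_card_mul_re_trace_mul_conjTranspose_self (A i)
  rcases (Nat.cast_nonneg (Fintype.card ι) : (0 : ℝ) ≤ _).eq_or_lt with hι | hι
  · simpa [← hι] using hD_nonneg
  rcases (Nat.cast_nonneg (Fintype.card n) : (0 : ℝ) ≤ _).eq_or_lt with hn | hn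
  · simpa [← hn] using hD_nonneg
  rw [div_le_iff₀ hι]
  nlinarith

end Matrix

theorem sqNorm_conjTranspose_mul {r k : ℕ} (B C : Matrix (Fin r) (Fin k) ℂ) :
    sqNorm (Bᴴ * C) = (B * Bᴴ * (C * Cᴴ)).trace.re := by
  rw [sqNorm, conjTranspose_mul, conjTranspose_conjTranspose, ← Matrix.mul_assoc,
    trace_mul_comm]
  simp only [Matrix.mul_assoc]

theorem cross_terms_bound_general {q r c : ℕ}
    (C : Fin q → Matrix (Fin r) (Fin c) ℂ)
    (hC : ∑ i, C i * (C i)ᴴ = 1) :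
    (∑ i, ∑ j, if i = j then 0 else sqNorm ((C i)ᴴ * C j))
      ≤ (r : ℝ) * (1 - 1 / (q : ℝ)) := by
  have hall := Matrix.sum_sum_re_trace_mul_eq_card (fun i => C i * (C i)ᴴ) hC
  have hdiag := Matrix.card_div_card_le_sum_re_trace_mul_self (fun i => C i * (C i)ᴴ)
    (fun i => isHermitian_mul_conjTranspose_self (C i)) hC
  simp only [Fintype.card_fin] at hall hdiag
  simp only [sqNorm_conjTranspose_mul, Fintype.sum_sum_ite_eq_zero_eq_sub, hall]
  linarith [mul_one_sub (r : ℝ) (1 / q), mul_one_div (r : ℝ) q]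

/-- Claim 3.7: cross terms of a row-normalized collection of blocks. -/
theorem cross_terms_bound {q r c : ℕ} (hq : 0 < q)
    (C : Fin q → Matrix (Fin r) (Fin c) ℂ)
    (hC : ∑ i, C i * (C i)ᴴ = 1) :
    (∑ i, ∑ j, if i = j then 0 else sqNorm ((C i)ᴴ * C j))
      ≤ (r : ℝ) * (1 - 1 / (q : ℝ)) :=
  cross_terms_bound_general C hC
end
end
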